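/- arXiv:2209.02988 — 4 statements merged into one kernel-verified Lean document; each statement's English description precedes it below -/
import Mathlib

section
/- Let V be a finite set partitioned into U₁, U₂, U₃, U₄ and let U* ⊆ V. Let F be a linear forest on V such that every vertex of U* has in-degree and out-degree exactly 1 in F, V⁺(F) ⊆ U₁∖U* and V⁻(F) ⊆ U₄∖U*. For each i ∈ {1,2,3}, let M_i be a perfect matching, with all edges oriented from U_i to U_{i+1}, between the sets {v ∈ U_i∖U* : d_F⁺(v) = 0} and {v ∈ U_{i+1}∖U* : d_F⁻(v) = 0}, and suppose that F, M₁, M₂, M₃ are pairwise edge-disjoint. Then F' := F ∪ M₁ ∪ M₂ ∪ M₃ is a linear forest with V(F') = V, V⁺(F') ⊆ U₁∖U*, V⁻(F') ⊆ U₄∖U*, and every internal vertex of F' lying in (U₁ ∪ U₄)∖U* belongs to V(F). -/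
open Finset

variable {V : Type}

/-- Out-degree of `v` in the digraph with edge set `F`. -/
def outDeg [DecidableEq V] (F : Finset (V × V)) (v : V) : ℕ :=
  (F.filter (fun e => e.1 = v)).card

/-- In-degree of `v` in the digraph with edge set `F`. -/
def inDeg [DecidableEq V] (F : Finset (V × V)) (v : V) : ℕ :=
  (F.filter (fun e => e.2 = v)).card

/-- The set of vertices incident to an edge of `F`. -/
def verts [DecidableEq V] (F : Finset (V × V)) : Finset V :=
  F.image Prod.fst ∪ F.image Prod.snd

/-- The number of edges of `T` directed from `X` to `Y`. -/
def eCount [DecidableEq V] (T : Finset (V × V)) (X Y : Finset V) : ℕ :=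
  (T.filter (fun e => e.1 ∈ X ∧ e.2 ∈ Y)).card

/-- `V⁺(F)`: starting points of the paths of a linear forest. -/
def startSet [Fintype V] [DecidableEq V] (F : Finset (V × V)) : Finset V :=
  Finset.univ.filter (fun v => outDeg F v = 1 ∧ inDeg F v = 0)

/-- `V⁻(F)`: ending points of the paths of a linear forest. -/
def endSet [Fintype V] [DecidableEq V] (F : Finset (V × V)) : Finset V :=
  Finset.univ.filter (fun v => inDeg F v = 1 ∧ outDeg F v = 0)

/-- `V⁰(F)`: internal vertices (in- and out-degree both 1). -/
def interiorSet [Fintype V] [DecidableEq V] (F : Finset (V × V)) : Finset V :=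
  Finset.univ.filter (fun v => outDeg F v = 1 ∧ inDeg F v = 1)

/-- `F` contains a directed cycle. -/
def HasCycle (F : Finset (V × V)) : Prop :=
  ∃ (v : V) (l : List V), (v :: l).Nodup ∧
    (v :: l).Chain' (fun a b => (a, b) ∈ F) ∧
    ((v :: l).getLast (List.cons_ne_nil v l), v) ∈ F

/-- A linear forest: a digraph whose components are directed paths. -/
def IsLinearForest [DecidableEq V] (F : Finset (V × V)) : Prop :=
  (∀ v, outDeg F v ≤ 1) ∧ (∀ v, inDeg F v ≤ 1) ∧ ¬ HasCycle F

/-- A directed path in `F`, recorded as its (nodup) list of vertices. -/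
def IsPathList (F : Finset (V × V)) (l : List V) : Prop :=
  2 ≤ l.length ∧ l.Nodup ∧ l.Chain' (fun a b => (a, b) ∈ F)

/-- The edge set of the cycle visiting the vertices of `l` in order. -/
def cycleEdges [DecidableEq V] (l : List V) : Finset (V × V) :=
  (l.zip (l.rotate 1)).toFinset

/-- `C` is a directed Hamilton cycle on the vertex set `X`. -/
def IsHamCycleOn [DecidableEq V] (C : Finset (V × V)) (X : Finset V) : Prop :=
  ∃ l : List V, l ≠ [] ∧ l.Nodup ∧ l.toFinset = X ∧ C = cycleEdges l

/-- The edge set of the path visiting the vertices of `l` in order. -/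
def listEdges [DecidableEq V] (l : List V) : Finset (V × V) :=
  (l.zip l.tail).toFinset

/-- `F` is a subdivision of `D`: `F` is obtained from `D` by replacing each edge
by a directed path with the same endpoints, where the paths are internally
vertex-disjoint and their internal vertices avoid `V(D)`. -/
def IsSubdivisionOf [DecidableEq V] (F D : Finset (V × V)) : Prop :=
  ∃ P : V × V → List V,
    (∀ e ∈ D, (P e).head? = some e.1 ∧ (P e).getLast? = some e.2 ∧
      (P e).Nodup ∧ 2 ≤ (P e).length) ∧
    (∀ e ∈ D, ∀ x ∈ (P e).tail.dropLast, x ∉ verts D) ∧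
    (∀ e ∈ D, ∀ e' ∈ D, e ≠ e' → ∀ x ∈ (P e).tail.dropLast, x ∉ (P e').tail.dropLast) ∧
    F = D.biUnion (fun e => listEdges (P e))

/-- `M` is a perfect matching, all of whose edges are oriented from `Sp` to `Sm`,
between the sets `Sp` and `Sm`. -/
def MatchingBetween [DecidableEq V] (M : Finset (V × V)) (Sp Sm : Finset V) : Prop :=
  (∀ e ∈ M, e.1 ∈ Sp ∧ e.2 ∈ Sm) ∧
  (∀ v ∈ Sp, outDeg M v = 1) ∧
  (∀ v ∈ Sm, inDeg M v = 1)

/-!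
A vertex outside `U₄` with no out-edge in `F` is not in `U*`, so it receives exactly one out-edge
from the matchings; symmetrically for in-edges outside `U₁`. Hence in `F'` every vertex has in- and
out-degree at most one, out-degree zero only in `U₄` and in-degree zero only in `U₁`; this gives the
claims about `V(F')`, `V⁺(F')`, `V⁻(F')` and `V⁰(F')`.

For acyclicity, the head of a matching edge lies outside `U₁` and has in-degree zero in `F`; since
the paths of `F` start in `U₁`, it is isolated in `F`. So on a cycle of `F'` every matching edge is
followed by another matching edge, which moves one class `Uᵢ` further. The class index cannot
increase all the way around the cycle, so the cycle uses no matching edge and lies in `F`.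
-/

section Degree

variable [DecidableEq V] {A B : Finset (V × V)} {v : V}

lemma outDeg_eq_zero_iff : outDeg A v = 0 ↔ ∀ e ∈ A, e.1 ≠ v := by
  rw [outDeg, card_eq_zero, filter_eq_empty_iff]

lemma inDeg_eq_zero_iff : inDeg A v = 0 ↔ ∀ e ∈ A, e.2 ≠ v := by
  rw [inDeg, card_eq_zero, filter_eq_empty_iff]

lemma outDeg_union_eq_left (h : outDeg B v = 0) : outDeg (A ∪ B) v = outDeg A v := by
  rw [outDeg, filter_union, card_eq_zero.mp h, union_empty, outDeg]

lemma outDeg_union_eq_right (h : outDeg A v = 0) : outDeg (A ∪ B) v = outDeg B v := by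
  rw [union_comm, outDeg_union_eq_left h]

lemma inDeg_union_eq_left (h : inDeg B v = 0) : inDeg (A ∪ B) v = inDeg A v := by
  rw [inDeg, filter_union, card_eq_zero.mp h, union_empty, inDeg]

lemma inDeg_union_eq_right (h : inDeg A v = 0) : inDeg (A ∪ B) v = inDeg B v := by
  rw [union_comm, inDeg_union_eq_left h]

lemma mem_verts_of_outDeg_ne_zero (h : outDeg A v ≠ 0) : v ∈ verts A := by
  obtain ⟨e, he⟩ := card_ne_zero.mp h
  rw [mem_filter] at he
  exact mem_union_left _ (mem_image.mpr ⟨e, he⟩)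

lemma mem_verts_of_inDeg_ne_zero (h : inDeg A v ≠ 0) : v ∈ verts A := by
  obtain ⟨e, he⟩ := card_ne_zero.mp h
  rw [mem_filter] at he
  exact mem_union_right _ (mem_image.mpr ⟨e, he⟩)

lemma outDeg_eq_zero_of_inDeg_eq_zero [Fintype V] {S : Finset V} (hA : ∀ v, outDeg A v ≤ 1)
    (hstart : startSet A ⊆ S) (hin : inDeg A v = 0) (hv : v ∉ S) : outDeg A v = 0 := by
  by_contra hout
  exact hv (hstart (by simp [startSet, hin, (by have := hA v; omega : outDeg A v = 1)]))

end Degree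

namespace MatchingBetween

variable [DecidableEq V] {M M' : Finset (V × V)} {Sp Sm Sp' Sm' : Finset V} {v : V}

lemma outDeg_eq_zero (h : MatchingBetween M Sp Sm) (hv : v ∉ Sp) : outDeg M v = 0 :=
  outDeg_eq_zero_iff.mpr fun e he hev => hv (hev ▸ (h.1 e he).1)

lemma inDeg_eq_zero (h : MatchingBetween M Sp Sm) (hv : v ∉ Sm) : inDeg M v = 0 :=
  inDeg_eq_zero_iff.mpr fun e he hev => hv (hev ▸ (h.1 e he).2)

lemma union (h : MatchingBetween M Sp Sm) (h' : MatchingBetween M' Sp' Sm')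
    (hp : Disjoint Sp Sp') (hm : Disjoint Sm Sm') :
    MatchingBetween (M ∪ M') (Sp ∪ Sp') (Sm ∪ Sm') := by
  refine ⟨fun e he => ?_, fun v hv => ?_, fun v hv => ?_⟩
  · rcases mem_union.mp he with he | he
    · exact ⟨mem_union_left _ (h.1 e he).1, mem_union_left _ (h.1 e he).2⟩
    · exact ⟨mem_union_right _ (h'.1 e he).1, mem_union_right _ (h'.1 e he).2⟩
  · rcases mem_union.mp hv with hv | hv
    · rw [outDeg_union_eq_left (h'.outDeg_eq_zero (disjoint_left.mp hp hv)), h.2.1 v hv]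
    · rw [outDeg_union_eq_right (h.outDeg_eq_zero (disjoint_right.mp hp hv)), h'.2.1 v hv]
  · rcases mem_union.mp hv with hv | hv
    · rw [inDeg_union_eq_left (h'.inDeg_eq_zero (disjoint_left.mp hm hv)), h.2.2 v hv]
    · rw [inDeg_union_eq_right (h.inDeg_eq_zero (disjoint_right.mp hm hv)), h'.2.2 v hv]

end MatchingBetween

section ClosingUp

variable [DecidableEq V] {F G N : Finset (V × V)} {A B S Sp Sm : Finset V} {v : V}

lemma outDeg_union_matchingBetween (hN : MatchingBetween N Sp Sm)
    (hSp : ∀ v ∈ Sp, outDeg F v = 0) (v : V) :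
    outDeg (F ∪ N) v = if v ∈ Sp then 1 else outDeg F v := by
  split_ifs with hv
  · rw [outDeg_union_eq_right (hSp v hv), hN.2.1 v hv]
  · exact outDeg_union_eq_left (hN.outDeg_eq_zero hv)

lemma inDeg_union_matchingBetween (hN : MatchingBetween N Sp Sm)
    (hSm : ∀ v ∈ Sm, inDeg F v = 0) (v : V) :
    inDeg (F ∪ N) v = if v ∈ Sm then 1 else inDeg F v := by
  split_ifs with hv
  · rw [inDeg_union_eq_right (hSm v hv), hN.2.2 v hv]
  · exact inDeg_union_eq_left (hN.inDeg_eq_zero hv)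

variable [Fintype V]

lemma outDeg_union_eq_ite (hF : ∀ v, outDeg F v ≤ 1) (hS : ∀ v ∈ S, outDeg F v = 1)
    (hN : MatchingBetween N (univ.filter fun v => v ∉ B ∧ v ∉ S ∧ outDeg F v = 0) Sm) (v : V) :
    outDeg (F ∪ N) v = if v ∈ B then outDeg F v else 1 := by
  rw [outDeg_union_matchingBetween hN (fun v hv => (mem_filter.mp hv).2.2.2) v]
  rcases Nat.le_one_iff_eq_zero_or_eq_one.mp (hF v) with h | h
  · have hv : v ∉ S := fun hv => by simp [hS v hv] at h
    simp [h, hv]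
  · simp [h]

lemma inDeg_union_eq_ite (hF : ∀ v, inDeg F v ≤ 1) (hS : ∀ v ∈ S, inDeg F v = 1)
    (hN : MatchingBetween N Sp (univ.filter fun v => v ∉ A ∧ v ∉ S ∧ inDeg F v = 0)) (v : V) :
    inDeg (F ∪ N) v = if v ∈ A then inDeg F v else 1 := by
  rw [inDeg_union_matchingBetween hN (fun v hv => (mem_filter.mp hv).2.2.2) v]
  rcases Nat.le_one_iff_eq_zero_or_eq_one.mp (hF v) with h | h
  · have hv : v ∉ S := fun hv => by simp [hS v hv] at h
    simp [h, hv]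
  · simp [h]

lemma verts_eq_univ_of_deg_eq_ite (hout : ∀ v, outDeg G v = if v ∈ B then outDeg F v else 1)
    (hin : ∀ v, inDeg G v = if v ∈ A then inDeg F v else 1) (hAB : Disjoint A B) :
    verts G = univ := by
  refine eq_univ_of_forall fun v => ?_
  by_cases hv : v ∈ B
  · exact mem_verts_of_inDeg_ne_zero (by simp [hin, disjoint_right.mp hAB hv])
  · exact mem_verts_of_outDeg_ne_zero (by simp [hout, hv])

lemma startSet_subset_of_inDeg_eq_ite (hin : ∀ v, inDeg G v = if v ∈ A then inDeg F v else 1)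
    (hS : ∀ v ∈ S, inDeg F v = 1) : startSet G ⊆ A \ S := by
  intro v hv
  simp only [startSet, mem_filter, hin] at hv
  split_ifs at hv with h
  · exact mem_sdiff.mpr ⟨h, fun hs => by simp [hS v hs] at hv⟩
  · simp at hv

lemma endSet_subset_of_outDeg_eq_ite (hout : ∀ v, outDeg G v = if v ∈ B then outDeg F v else 1)
    (hS : ∀ v ∈ S, outDeg F v = 1) : endSet G ⊆ B \ S := by
  intro v hv
  simp only [endSet, mem_filter, hout] at hv
  split_ifs at hv with h
  · exact mem_sdiff.mpr ⟨h, fun hs => by simp [hS v hs] at hv⟩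
  · simp at hv

lemma mem_verts_of_mem_interiorSet (hout : ∀ v, outDeg G v = if v ∈ B then outDeg F v else 1)
    (hin : ∀ v, inDeg G v = if v ∈ A then inDeg F v else 1) (hv : v ∈ interiorSet G)
    (hmem : v ∈ A ∪ B) : v ∈ verts F := by
  simp only [interiorSet, mem_filter, hout, hin] at hv
  rcases mem_union.mp hmem with h | h
  · exact mem_verts_of_inDeg_ne_zero (by simp_all)
  · exact mem_verts_of_outDeg_ne_zero (by simp_all)

end ClosingUp

section Cycle

lemma List.exists_cons_cons_of_getLast?_eq {α : Type*} {v a b : α} {m l₁ l₂ : List α}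
    (hm : m.getLast? = some v) (h : v :: m = l₁ ++ a :: b :: l₂) :
    ∃ c l₁' l₂', v :: m = l₁' ++ b :: c :: l₂' := by
  cases l₂ with
  | cons c l₂ => exact ⟨c, l₁ ++ [a], l₂, by simp [h]⟩
  | nil =>
    cases m with
    | nil => simp at hm
    | cons c m =>
      have hb : b = v := by simpa [hm] using (congrArg List.getLast? h).symm
      exact ⟨c, [], m, by simp [hb]⟩

lemma hasCycle_iff_exists_closed_walk {F : Finset (V × V)} : HasCycle F ↔
    ∃ v l, (v :: l).Nodup ∧ (v :: l ++ [v]).IsChain (fun a b => (a, b) ∈ F) := by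
  refine exists_congr fun v => exists_congr fun l => and_congr_right fun _ => ?_
  show List.IsChain _ _ ∧ _ ↔ _
  rw [List.isChain_append, List.getLast?_eq_some_getLast (List.cons_ne_nil v l)]
  simp

variable [DecidableEq V] {F N : Finset (V × V)} {β : Type*} [LinearOrder β] {ρ : V → β}

lemma isChain_of_isChain_union (hρ : ∀ e ∈ N, ρ e.1 < ρ e.2) (hN : ∀ e ∈ N, ∀ f ∈ F, f.1 ≠ e.2)
    {v : V} {m : List V} (hm : m.getLast? = some v)
    (h : (v :: m).IsChain (fun a b => (a, b) ∈ F ∪ N)) :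
    (v :: m).IsChain (fun a b => (a, b) ∈ F) := by
  classical
  rw [List.isChain_iff_forall_rel_of_append_cons_cons] at h ⊢
  set E := N.filter (fun e => ∃ l₁ l₂, v :: m = l₁ ++ e.1 :: e.2 :: l₂)
  suffices hE : E = ∅ by
    intro a b l₁ l₂ hab
    refine (mem_union.mp (h hab)).resolve_right fun habN => ?_
    have : (a, b) ∈ E := mem_filter.mpr ⟨habN, l₁, l₂, hab⟩
    simp [hE] at this
  by_contra hne
  obtain ⟨e, heE, hmax⟩ := E.exists_max_image (fun e => ρ e.2) (nonempty_iff_ne_empty.mpr hne)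
  obtain ⟨heN, l₁, l₂, he⟩ := mem_filter.mp heE
  obtain ⟨c, l₁', l₂', hc⟩ := List.exists_cons_cons_of_getLast?_eq hm he
  have hcN : (e.2, c) ∈ N := (mem_union.mp (h hc)).resolve_left fun hcF => hN e heN _ hcF rfl
  exact (hmax _ (mem_filter.mpr ⟨hcN, l₁', l₂', hc⟩)).not_gt (hρ _ hcN)

lemma not_hasCycle_union (hF : ¬HasCycle F) (hρ : ∀ e ∈ N, ρ e.1 < ρ e.2)
    (hN : ∀ e ∈ N, ∀ f ∈ F, f.1 ≠ e.2) : ¬HasCycle (F ∪ N) := by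
  rw [hasCycle_iff_exists_closed_walk] at hF ⊢
  rintro ⟨v, l, hnd, hch⟩
  exact hF ⟨v, l, hnd, isChain_of_isChain_union hρ hN (by simp) hch⟩

end Cycle

lemma exists_index_of_pairwise_disjoint {ι : Type*} {U : ι → Finset V}
    (hdisj : ∀ i j, i ≠ j → Disjoint (U i) (U j)) (hcover : ∀ v, ∃ i, v ∈ U i) :
    ∃ part : V → ι, ∀ v i, v ∈ U i ↔ part v = i := by
  choose part hpart using hcover
  refine ⟨part, fun v i => ⟨fun hv => ?_, fun h => h ▸ hpart v⟩⟩
  by_contra hne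
  exact disjoint_left.mp (hdisj _ _ hne) (hpart v) hv

section FourClasses

variable [DecidableEq V] {U : Fin 4 → Finset V} {part : V → Fin 4} {Ustar : Finset V}
  {F : Finset (V × V)} {M : Fin 3 → Finset (V × V)}

lemma matchingBetween_union_three [Fintype V] (hpart : ∀ v i, v ∈ U i ↔ part v = i)
    (hM : ∀ i : Fin 3,
      MatchingBetween (M i)
        ((U i.castSucc \ Ustar).filter (fun v => outDeg F v = 0))
        ((U i.succ \ Ustar).filter (fun v => inDeg F v = 0))) :
    MatchingBetween (M 0 ∪ M 1 ∪ M 2)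
      (univ.filter fun v => v ∉ U 3 ∧ v ∉ Ustar ∧ outDeg F v = 0)
      (univ.filter fun v => v ∉ U 0 ∧ v ∉ Ustar ∧ inDeg F v = 0) := by
  have h := ((hM 0).union (hM 1) ?_ ?_).union (hM 2) ?_ ?_
  · convert h using 1 <;> ext v <;>
      simp only [mem_filter, mem_univ, true_and, mem_union, mem_sdiff, hpart] <;>
      generalize part v = k <;> fin_cases k <;> simp
  all_goals simp only [disjoint_left, mem_filter, mem_sdiff, hpart]; grind

lemma part_lt_part_of_mem_union_three (hpart : ∀ v i, v ∈ U i ↔ part v = i)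
    (hM : ∀ i : Fin 3,
      MatchingBetween (M i)
        ((U i.castSucc \ Ustar).filter (fun v => outDeg F v = 0))
        ((U i.succ \ Ustar).filter (fun v => inDeg F v = 0))) :
    ∀ e ∈ M 0 ∪ M 1 ∪ M 2, part e.1 < part e.2 := by
  have key : ∀ i, ∀ e ∈ M i, part e.1 < part e.2 := fun i e he => by
    have h := (hM i).1 e he
    simp only [mem_filter, mem_sdiff, hpart] at h
    rw [h.1.1.1, h.2.1.1]
    exact Fin.castSucc_lt_succ
  simp only [mem_union]
  rintro e ((he | he) | he) <;> exact key _ e he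

end FourClasses

theorem matchings_extend_linear_forest_general {V : Type} [Fintype V] [DecidableEq V]
    (U : Fin 4 → Finset V) (Ustar : Finset V)
    (hdisj : ∀ i j, i ≠ j → Disjoint (U i) (U j))
    (hcover : U 0 ∪ U 1 ∪ U 2 ∪ U 3 = Finset.univ)
    (F : Finset (V × V))
    (hF : IsLinearForest F)
    (hdeg : ∀ v ∈ Ustar, outDeg F v = 1 ∧ inDeg F v = 1)
    (hstart : startSet F ⊆ U 0 \ Ustar)
    (M : Fin 3 → Finset (V × V))
    (hM : ∀ i : Fin 3,
      MatchingBetween (M i)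
        ((U i.castSucc \ Ustar).filter (fun v => outDeg F v = 0))
        ((U i.succ \ Ustar).filter (fun v => inDeg F v = 0))) :
    IsLinearForest (F ∪ M 0 ∪ M 1 ∪ M 2) ∧
    verts (F ∪ M 0 ∪ M 1 ∪ M 2) = Finset.univ ∧
    startSet (F ∪ M 0 ∪ M 1 ∪ M 2) ⊆ U 0 \ Ustar ∧
    endSet (F ∪ M 0 ∪ M 1 ∪ M 2) ⊆ U 3 \ Ustar ∧
    ∀ v ∈ interiorSet (F ∪ M 0 ∪ M 1 ∪ M 2),
      v ∈ (U 0 ∪ U 3) \ Ustar → v ∈ verts F := by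
  obtain ⟨part, hpart⟩ := exists_index_of_pairwise_disjoint hdisj fun v => by
    simpa [Fin.exists_fin_succ, or_assoc] using (Finset.ext_iff.mp hcover v).mpr (mem_univ v)
  set N := M 0 ∪ M 1 ∪ M 2
  have hN : MatchingBetween N _ _ := matchingBetween_union_three hpart hM
  have hout := outDeg_union_eq_ite hF.1 (fun v hv => (hdeg v hv).1) hN
  have hin := inDeg_union_eq_ite hF.2.1 (fun v hv => (hdeg v hv).2) hN
  have hNF : ∀ e ∈ N, ∀ f ∈ F, f.1 ≠ e.2 := fun e he => by
    obtain ⟨-, h0, -, hin0⟩ := mem_filter.mp (hN.1 e he).2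
    exact outDeg_eq_zero_iff.mp
      (outDeg_eq_zero_of_inDeg_eq_zero hF.1 hstart hin0 fun h => h0 (mem_sdiff.mp h).1)
  rw [show F ∪ M 0 ∪ M 1 ∪ M 2 = F ∪ N by simp only [N, union_assoc]]
  refine ⟨⟨fun v => ?_, fun v => ?_, ?_⟩,
    verts_eq_univ_of_deg_eq_ite hout hin (hdisj 0 3 (by decide)),
    startSet_subset_of_inDeg_eq_ite hin fun v hv => (hdeg v hv).2,
    endSet_subset_of_outDeg_eq_ite hout fun v hv => (hdeg v hv).1,
    fun v hv h => mem_verts_of_mem_interiorSet hout hin hv (mem_sdiff.mp h).1⟩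
  · rw [hout]; split_ifs; exacts [hF.1 v, le_rfl]
  · rw [hin]; split_ifs; exacts [hF.2.1 v, le_rfl]
  · exact not_hasCycle_union hF.2.2 (part_lt_part_of_mem_union_three hpart hM) hNF

/-- Closing up a linear forest by three perfect matchings yields a
spanning linear forest whose paths start in `U₁ ∖ U*` and end in `U₄ ∖ U*`, and whose
new internal vertices in `(U₁ ∪ U₄) ∖ U*` all lie in `V(F)`. -/
theorem matchings_extend_linear_forest {V : Type} [Fintype V] [DecidableEq V]
    (U : Fin 4 → Finset V) (Ustar : Finset V)
    (hdisj : ∀ i j, i ≠ j → Disjoint (U i) (U j))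
    (hcover : U 0 ∪ U 1 ∪ U 2 ∪ U 3 = Finset.univ)
    (hUstar : Ustar ⊆ Finset.univ)
    (F : Finset (V × V))
    (hF : IsLinearForest F)
    (hdeg : ∀ v ∈ Ustar, outDeg F v = 1 ∧ inDeg F v = 1)
    (hstart : startSet F ⊆ U 0 \ Ustar)
    (hend : endSet F ⊆ U 3 \ Ustar)
    (M : Fin 3 → Finset (V × V))
    (hM : ∀ i : Fin 3,
      MatchingBetween (M i)
        ((U i.castSucc \ Ustar).filter (fun v => outDeg F v = 0))
        ((U i.succ \ Ustar).filter (fun v => inDeg F v = 0)))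
    (hMF : ∀ i, Disjoint F (M i))
    (hMM : ∀ i j, i ≠ j → Disjoint (M i) (M j)) :
    IsLinearForest (F ∪ M 0 ∪ M 1 ∪ M 2) ∧
    verts (F ∪ M 0 ∪ M 1 ∪ M 2) = Finset.univ ∧
    startSet (F ∪ M 0 ∪ M 1 ∪ M 2) ⊆ U 0 \ Ustar ∧
    endSet (F ∪ M 0 ∪ M 1 ∪ M 2) ⊆ U 3 \ Ustar ∧
    ∀ v ∈ interiorSet (F ∪ M 0 ∪ M 1 ∪ M 2),
      v ∈ (U 0 ∪ U 3) \ Ustar → v ∈ verts F :=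
  matchings_extend_linear_forest_general U Ustar hdisj hcover F hF hdeg hstart M hM
end

section
/- Let A and B be disjoint finite sets with |A| = |B|. Let F be a linear forest with V(F) = A ∪ B, V⁺(F) ⊆ B and V⁻(F) ⊆ A (so every component of F is a directed path which starts in B and ends in A). Then there exists a linear forest F' with V(F') = A ∪ B such that every edge of F' joins a vertex of A and a vertex of B, and there is a bijection between the components of F and the components of F' under which corresponding paths have the same starting point and the same ending point. In particular, V⁺(F') = V⁺(F), V⁻(F') = V⁻(F) and V⁰(F') = V⁰(F). -/
open Finset

variable {V : Type}

/-!
Every path of `F` runs from `B` to `A`. Counting the edges by their tails and by their heads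
gives `|V⁺(F)| = |V⁻(F)|`, hence `|A \ V⁻(F)| = |B \ V⁺(F)|`: the internal vertices split evenly
between the two sides. Let `φ` send each start `s` to the end of its path; it is a bijection
`V⁺(F) → V⁻(F)`. Take for `F'` the edges `s → φ s`, except for one start `s₁`, whose path is
rerouted through all the internal vertices, alternating between the two sides:
`s₁ a₁ b₁ … a_k b_k (φ s₁)`. All edges of `F'` lie on the single path
`s₁ a₁ b₁ … a_k b_k (φ s₁) s₂ (φ s₂) …`, so `F'` is a linear forest. `F` and `F'` have the same
vertices of positive out-degree and of positive in-degree, hence the same `V⁺`, `V⁻` and `V⁰`;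
and as out-degrees are at most one, in both forests the path from `s` ends at `φ s`.
-/

namespace List

variable {α : Type*} {R : α → α → Prop}

theorem isChain_iff_forall_mem_zip_tail : ∀ {l : List α},
    l.IsChain R ↔ ∀ p ∈ l.zip l.tail, R p.1 p.2
  | [] => by simp
  | [_] => by simp
  | a :: b :: l => by
    rw [isChain_cons_cons, isChain_iff_forall_mem_zip_tail (l := b :: l)]
    simp

theorem mem_zip_tail_iff_getElem {l : List α} {a b : α} :
    (a, b) ∈ l.zip l.tail ↔ ∃ (i : ℕ) (h : i + 1 < l.length), l[i] = a ∧ l[i + 1] = b := by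
  simp only [mem_iff_getElem, getElem_zip, getElem_tail, length_zip, length_tail,
    Prod.mk.injEq]
  constructor
  · rintro ⟨i, hi, h⟩
    exact ⟨i, by omega, h⟩
  · rintro ⟨i, hi, h⟩
    exact ⟨i, by omega, h⟩

theorem isChain_interleave_iff : ∀ {xs ys : List α}, xs.length = ys.length →
    ((xs.interleave ys).IsChain R ↔
      (∀ p ∈ xs.zip ys, R p.1 p.2) ∧ ∀ p ∈ ys.zip xs.tail, R p.1 p.2)
  | [], [], _ => by simp
  | [x], [y], _ => by simp
  | x :: x' :: xs, y :: y' :: ys, h => by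
    have ih := isChain_interleave_iff (xs := x' :: xs) (ys := y' :: ys) (by simpa using h)
    simp only [cons_interleave] at ih ⊢
    rw [isChain_cons_cons, isChain_cons_cons, ih]
    simp only [zip_cons_cons, tail_cons, forall_mem_cons]
    tauto
  | [], _ :: _, h | _ :: _, [], h | [_], _ :: _ :: _, h | _ :: _ :: _, [_], h => by
    simp at h

theorem mem_zip_tail_interleave {xs ys : List α} (h : xs.length = ys.length) {p : α × α}
    (hp : p ∈ xs.zip ys ∨ p ∈ ys.zip xs.tail) :
    p ∈ (xs.interleave ys).zip (xs.interleave ys).tail := by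
  have := (isChain_interleave_iff (R := fun a b => (a, b) ∈ (xs.interleave ys).zip _) h).1
    (isChain_iff_forall_mem_zip_tail.2 fun q hq => hq)
  exact hp.elim (this.1 p) (this.2 p)

theorem mem_image_fst_zip_toFinset [DecidableEq α] {xs ys : List α} (h : xs.length ≤ ys.length)
    {v : α} : v ∈ (xs.zip ys).toFinset.image Prod.fst ↔ v ∈ xs := by
  conv_rhs => rw [← map_fst_zip h]
  simp

theorem mem_image_snd_zip_toFinset [DecidableEq α] {xs ys : List α} (h : ys.length ≤ xs.length)
    {v : α} : v ∈ (xs.zip ys).toFinset.image Prod.snd ↔ v ∈ ys := by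
  conv_rhs => rw [← map_snd_zip h]
  simp

theorem exists_rel_of_isChain_cons {a x : α} : ∀ {l : List α}, (a :: l).IsChain R → x ∈ l →
    ∃ y, R y x
  | b :: l, hc, hx => by
    rw [isChain_cons_cons] at hc
    rcases mem_cons.1 hx with rfl | hx
    exacts [⟨a, hc.1⟩, exists_rel_of_isChain_cons hc.2 hx]

theorem eq_of_isChain_of_functional (hR : ∀ a b c, R a b → R a c → b = c) :
    ∀ {l₁ l₂ : List α}, l₁.IsChain R → l₂.IsChain R → l₁.head? = l₂.head? →
      (∀ x ∈ l₁.getLast?, ∀ y, ¬ R x y) → (∀ x ∈ l₂.getLast?, ∀ y, ¬ R x y) → l₁ = l₂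
  | [], [], _, _, _, _, _ => rfl
  | [], _ :: _, _, _, hh, _, _ | _ :: _, [], _, _, hh, _, _ => by simp at hh
  | [a], [b], _, _, hh, _, _ => by simpa using hh
  | [a], b :: c :: l, _, h₂, hh, ht₁, _ => by
    simp only [head?_cons, Option.some.injEq] at hh
    subst hh
    exact absurd (isChain_cons_cons.1 h₂).1 (ht₁ a rfl c)
  | a :: b :: l, [c], h₁, _, hh, _, ht₂ => by
    simp only [head?_cons, Option.some.injEq] at hh
    subst hh
    exact absurd (isChain_cons_cons.1 h₁).1 (ht₂ a rfl b)
  | a :: b :: l₁, c :: d :: l₂, h₁, h₂, hh, ht₁, ht₂ => by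
    simp only [head?_cons, Option.some.injEq] at hh
    subst hh
    rw [isChain_cons_cons] at h₁ h₂
    obtain rfl := hR a b d h₁.1 h₂.1
    rw [getLast?_cons_cons] at ht₁ ht₂
    rw [eq_of_isChain_of_functional hR h₁.2 h₂.2 rfl ht₁ ht₂]

end List

section Cycles

variable {G : Finset (V × V)}

theorem not_hasCycle_of_lt (f : V → ℕ) (hf : ∀ e ∈ G, f e.1 < f e.2) : ¬ HasCycle G := by
  rintro ⟨v, l, -, hc, hlast⟩
  have hcycle : ((v :: l) ++ [v]).IsChain fun a b => (a, b) ∈ G :=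
    List.isChain_append.2 ⟨hc, .singleton v, by
      simpa [List.getLast?_eq_some_getLast (List.cons_ne_nil v l)] using hlast⟩
  have hsorted :=
    List.isChain_iff_pairwise.1 ((List.isChain_map f).2 (hcycle.imp fun a b => hf (a, b)))
  rw [List.map_append] at hsorted
  exact lt_irrefl _ ((List.pairwise_append.1 hsorted).2.2 (f v) (by simp) (f v) (by simp))

theorem notMem_of_not_hasCycle (hG : ¬ HasCycle G) {l : List V} (hnd : l.Nodup)
    (hc : l.IsChain fun a b => (a, b) ∈ G) {x w : V} (hx : l.getLast? = some x)
    (hxw : (x, w) ∈ G) : w ∉ l := by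
  intro hw
  obtain ⟨p, q, rfl⟩ := List.append_of_mem hw
  refine hG ⟨w, q, hnd.sublist (List.sublist_append_right _ _),
    hc.infix (List.suffix_append p _).isInfix, ?_⟩
  rw [List.getLast?_append, List.getLast?_eq_some_getLast (List.cons_ne_nil w q), Option.some_or,
    Option.some.injEq] at hx
  rwa [hx]

end Cycles

section Digraph

variable [DecidableEq V] {G H : Finset (V × V)} {v : V}

theorem outDeg_pos_iff : 0 < outDeg G v ↔ v ∈ G.image Prod.fst := by
  simp [outDeg, card_pos, filter_nonempty_iff]

theorem inDeg_pos_iff : 0 < inDeg G v ↔ v ∈ G.image Prod.snd := by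
  simp [inDeg, card_pos, filter_nonempty_iff]

theorem outDeg_le_one_iff : outDeg G v ≤ 1 ↔ ∀ w w', (v, w) ∈ G → (v, w') ∈ G → w = w' := by
  simp only [outDeg, card_le_one, mem_filter, and_imp, Prod.forall, Prod.mk.injEq]
  constructor
  · intro h w w' hw hw'
    exact (h v w hw rfl v w' hw' rfl).2
  · rintro h _ w hw rfl _ w' hw' rfl
    exact ⟨rfl, h w w' hw hw'⟩

theorem inDeg_le_one_iff : inDeg G v ≤ 1 ↔ ∀ u u', (u, v) ∈ G → (u', v) ∈ G → u = u' := by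
  simp only [inDeg, card_le_one, mem_filter, and_imp, Prod.forall, Prod.mk.injEq]
  constructor
  · intro h u u' hu hu'
    exact (h u v hu rfl u' v hu' rfl).1
  · rintro h u _ hu rfl u' _ hu' rfl
    exact ⟨h u u' hu hu', rfl⟩

theorem IsLinearForest.mono (hG : IsLinearForest G) (hHG : H ⊆ G) : IsLinearForest H := by
  obtain ⟨hout, hin, hcyc⟩ := hG
  refine ⟨fun v => ?_, fun v => ?_, fun ⟨v, l, hnd, hc, hlast⟩ => hcyc ⟨v, l, hnd, ?_, hHG hlast⟩⟩
  · exact (card_le_card (filter_subset_filter _ hHG)).trans (hout v)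
  · exact (card_le_card (filter_subset_filter _ hHG)).trans (hin v)
  · exact List.IsChain.imp (fun a b h => hHG h) hc

theorem isLinearForest_listEdges {L : List V} (hL : L.Nodup) : IsLinearForest (listEdges L) := by
  have hedge : ∀ {a b}, (a, b) ∈ listEdges L →
      ∃ (i : ℕ) (h : i + 1 < L.length), L[i] = a ∧ L[i + 1] = b := fun he =>
    List.mem_zip_tail_iff_getElem.1 (List.mem_toFinset.1 he)
  refine ⟨fun v => outDeg_le_one_iff.2 fun w w' hw hw' => ?_,
    fun v => inDeg_le_one_iff.2 fun u u' hu hu' => ?_, not_hasCycle_of_lt L.idxOf ?_⟩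
  · obtain ⟨i, hi, hiv, rfl⟩ := hedge hw
    obtain ⟨j, hj, hjv, rfl⟩ := hedge hw'
    obtain rfl : i = j := hL.getElem_inj_iff.1 (hiv.trans hjv.symm)
    rfl
  · obtain ⟨i, hi, rfl, hiv⟩ := hedge hu
    obtain ⟨j, hj, rfl, hjv⟩ := hedge hu'
    obtain rfl : i = j := by simpa using hL.getElem_inj_iff.1 (hiv.trans hjv.symm)
    rfl
  · rintro ⟨a, b⟩ he
    obtain ⟨i, hi, rfl, rfl⟩ := hedge he
    simp [hL.idxOf_getElem]

theorem exists_chain_to_sink [Fintype V] (hG : ¬ HasCycle G) (v : V) :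
    ∃ l : List V, l.head? = some v ∧ l.Nodup ∧ (l.IsChain fun a b => (a, b) ∈ G) ∧
      ∀ x ∈ l.getLast?, x ∉ G.image Prod.fst := by
  by_contra! hsink
  have hgrow : ∀ n : ℕ, ∃ l : List V, l.head? = some v ∧ l.Nodup ∧
      (l.IsChain fun a b => (a, b) ∈ G) ∧ l.length = n + 1 := by
    intro n
    induction n with
    | zero => exact ⟨[v], rfl, List.nodup_singleton v, .singleton v, rfl⟩
    | succ n ih =>
      obtain ⟨l, hv, hnd, hc, hlen⟩ := ih
      obtain ⟨x, hx, hxG⟩ := hsink l hv hnd hc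
      obtain ⟨⟨x', w⟩, hxw, rfl⟩ := mem_image.1 hxG
      refine ⟨l ++ [w], by simp [List.head?_append, hv], ?_, ?_, by simp [hlen]⟩
      · rw [← List.concat_eq_append]
        exact hnd.concat (notMem_of_not_hasCycle hG hnd hc hx hxw)
      · refine List.isChain_append.2 ⟨hc, .singleton w, fun a ha b hb => ?_⟩
        obtain rfl := Option.some.inj (ha.symm.trans hx)
        obtain rfl := Option.some.inj hb
        exact hxw
  obtain ⟨l, -, hnd, -, hlen⟩ := hgrow (Fintype.card V)
  have := hnd.length_le_card
  omega

end Digraph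

section DegreeSets

variable [Fintype V] [DecidableEq V] {G G' : Finset (V × V)} {v : V}

theorem mem_startSet_iff (hout : outDeg G v ≤ 1) (hin : inDeg G v ≤ 1) :
    v ∈ startSet G ↔ v ∈ G.image Prod.fst ∧ v ∉ G.image Prod.snd := by
  simp only [startSet, mem_filter, mem_univ, true_and, ← outDeg_pos_iff, ← inDeg_pos_iff]
  omega

theorem mem_endSet_iff (hout : outDeg G v ≤ 1) (hin : inDeg G v ≤ 1) :
    v ∈ endSet G ↔ v ∈ G.image Prod.snd ∧ v ∉ G.image Prod.fst := by
  simp only [endSet, mem_filter, mem_univ, true_and, ← outDeg_pos_iff, ← inDeg_pos_iff]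
  omega

theorem mem_interiorSet_iff (hout : outDeg G v ≤ 1) (hin : inDeg G v ≤ 1) :
    v ∈ interiorSet G ↔ v ∈ G.image Prod.fst ∧ v ∈ G.image Prod.snd := by
  simp only [interiorSet, mem_filter, mem_univ, true_and, ← outDeg_pos_iff, ← inDeg_pos_iff]
  omega

theorem notMem_image_fst_of_mem_endSet (hv : v ∈ endSet G) : v ∉ G.image Prod.fst := by
  rw [← outDeg_pos_iff, (mem_filter.1 hv).2.2]
  exact lt_irrefl 0

theorem notMem_image_snd_of_mem_startSet (hv : v ∈ startSet G) : v ∉ G.image Prod.snd := by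
  rw [← inDeg_pos_iff, (mem_filter.1 hv).2.2]
  exact lt_irrefl 0

theorem image_fst_eq_verts_sdiff_endSet (hout : ∀ v, outDeg G v ≤ 1)
    (hin : ∀ v, inDeg G v ≤ 1) : G.image Prod.fst = verts G \ endSet G := by
  ext v
  simp only [verts, mem_sdiff, mem_union, mem_endSet_iff (hout v) (hin v)]
  tauto

theorem image_snd_eq_verts_sdiff_startSet (hout : ∀ v, outDeg G v ≤ 1)
    (hin : ∀ v, inDeg G v ≤ 1) : G.image Prod.snd = verts G \ startSet G := by
  ext v
  simp only [verts, mem_sdiff, mem_union, mem_startSet_iff (hout v) (hin v)]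
  tauto

theorem degreeSets_eq_of_image_eq (hout : ∀ v, outDeg G v ≤ 1) (hin : ∀ v, inDeg G v ≤ 1)
    (hout' : ∀ v, outDeg G' v ≤ 1) (hin' : ∀ v, inDeg G' v ≤ 1)
    (hfst : G'.image Prod.fst = G.image Prod.fst) (hsnd : G'.image Prod.snd = G.image Prod.snd) :
    startSet G' = startSet G ∧ endSet G' = endSet G ∧ interiorSet G' = interiorSet G := by
  refine ⟨ext fun v => ?_, ext fun v => ?_, ext fun v => ?_⟩
  · rw [mem_startSet_iff (hout' v) (hin' v), mem_startSet_iff (hout v) (hin v), hfst, hsnd]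
  · rw [mem_endSet_iff (hout' v) (hin' v), mem_endSet_iff (hout v) (hin v), hfst, hsnd]
  · rw [mem_interiorSet_iff (hout' v) (hin' v), mem_interiorSet_iff (hout v) (hin v), hfst, hsnd]

/-- Both `V⁺(G)` and `V⁻(G)` have `|G| - |V⁰(G)|` elements. -/
theorem card_startSet_eq_card_endSet (hout : ∀ v, outDeg G v ≤ 1) (hin : ∀ v, inDeg G v ≤ 1) :
    #(startSet G) = #(endSet G) := by
  have hS : startSet G = G.image Prod.fst \ G.image Prod.snd := by
    ext v; simp only [mem_startSet_iff (hout v) (hin v), mem_sdiff]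
  have hT : endSet G = G.image Prod.snd \ G.image Prod.fst := by
    ext v; simp only [mem_endSet_iff (hout v) (hin v), mem_sdiff]
  have hfst : #(G.image Prod.fst) = #G := card_image_of_injOn fun e he e' he' h =>
    Prod.ext h (outDeg_le_one_iff.1 (hout e.1) _ _ he (h ▸ he'))
  have hsnd : #(G.image Prod.snd) = #G := card_image_of_injOn fun e he e' he' h =>
    Prod.ext (inDeg_le_one_iff.1 (hin e.2) _ _ he (h ▸ he')) h
  rw [hS, hT, card_sdiff, card_sdiff, inter_comm, hfst, hsnd]

end DegreeSets

section Paths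

variable [DecidableEq V] {G G' : Finset (V × V)} {s s' t t' v : V}

def HasPath (G : Finset (V × V)) (s t : V) : Prop :=
  ∃ l : List V, IsPathList G l ∧ l.head? = some s ∧ l.getLast? = some t

variable [Fintype V]

theorem exists_hasPath_endSet (hG : IsLinearForest G) (hv : v ∈ G.image Prod.fst) :
    ∃ t ∈ endSet G, HasPath G v t := by
  obtain ⟨l, hl, hnd, hc, hsink⟩ := exists_chain_to_sink hG.2.2 v
  rcases l with _ | ⟨a, _ | ⟨b, l⟩⟩
  · simp at hl
  · simp only [List.head?_cons, Option.some.injEq] at hl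
    exact absurd (hl ▸ hv) (hsink a rfl)
  · obtain ⟨t, ht⟩ : ∃ t, (a :: b :: l).getLast? = some t :=
      ⟨_, List.getLast?_eq_some_getLast (by simp)⟩
    have htl : t ∈ b :: l := List.mem_of_getLast? (List.getLast?_cons_cons ▸ ht)
    obtain ⟨u, hu⟩ := List.exists_rel_of_isChain_cons hc htl
    refine ⟨t, ?_, a :: b :: l, ⟨by simp, hnd, hc⟩, hl, ht⟩
    rw [mem_endSet_iff (hG.1 t) (hG.2.1 t)]
    exact ⟨mem_image_of_mem Prod.snd hu, hsink t ht⟩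

theorem HasPath.eq_of_endSet (hout : ∀ v, outDeg G v ≤ 1) (h : HasPath G s t)
    (h' : HasPath G s t') (ht : t ∈ endSet G) (ht' : t' ∈ endSet G) : t = t' := by
  obtain ⟨l, ⟨-, -, hc⟩, hs, hl⟩ := h
  obtain ⟨l', ⟨-, -, hc'⟩, hs', hl'⟩ := h'
  have hsink : ∀ {l : List V} {t}, l.getLast? = some t → t ∈ endSet G →
      ∀ x ∈ l.getLast?, ∀ y, (x, y) ∉ G := by
    rintro l t hl ht x hx y hxy
    rw [hl, Option.mem_some_iff] at hx
    exact notMem_image_fst_of_mem_endSet ht (hx ▸ mem_image_of_mem Prod.fst hxy)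
  obtain rfl := List.eq_of_isChain_of_functional (fun a => outDeg_le_one_iff.1 (hout a))
    hc hc' (hs.trans hs'.symm) (hsink hl ht) (hsink hl' ht')
  exact Option.some.inj (hl.symm.trans hl')

theorem HasPath.eq_of_startSet (hin : ∀ v, inDeg G v ≤ 1) (h : HasPath G s t)
    (h' : HasPath G s' t) (hs : s ∈ startSet G) (hs' : s' ∈ startSet G) : s = s' := by
  obtain ⟨l, ⟨-, -, hc⟩, hls, hl⟩ := h
  obtain ⟨l', ⟨-, -, hc'⟩, hls', hl'⟩ := h'
  have hsource : ∀ {l : List V} {s}, l.head? = some s → s ∈ startSet G →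
      ∀ x ∈ l.reverse.getLast?, ∀ y, (y, x) ∉ G := by
    rintro l s hl hs x hx y hyx
    rw [List.getLast?_reverse, hl, Option.mem_some_iff] at hx
    exact notMem_image_snd_of_mem_startSet hs (hx ▸ mem_image_of_mem Prod.snd hyx)
  have hrev := List.eq_of_isChain_of_functional
    (R := fun a b => (b, a) ∈ G) (fun a b c => inDeg_le_one_iff.1 (hin a) b c)
    (List.isChain_reverse.2 hc) (List.isChain_reverse.2 hc')
    (by rw [List.head?_reverse, List.head?_reverse, hl, hl']) (hsource hls hs) (hsource hls' hs')
  rw [← List.getLast?_reverse, hrev, List.getLast?_reverse, hls'] at hls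
  exact (Option.some.inj hls).symm

theorem eq_empty_of_startSet_eq_empty (hG : IsLinearForest G) (hS : startSet G = ∅) : G = ∅ := by
  by_contra hne
  obtain ⟨e, he⟩ := nonempty_iff_ne_empty.2 hne
  obtain ⟨t, ht, -⟩ := exists_hasPath_endSet hG (mem_image_of_mem Prod.fst he)
  have hT : endSet G = ∅ :=
    card_eq_zero.1 (by rw [← card_startSet_eq_card_endSet hG.1 hG.2.1, hS, card_empty])
  simp [hT] at ht

theorem and_hasPath_iff_of_pairing (hout : ∀ v, outDeg G v ≤ 1) (hout' : ∀ v, outDeg G' v ≤ 1)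
    (hS : startSet G' = startSet G) (hT : endSet G' = endSet G) {φ : V → V}
    (hφ : ∀ s ∈ startSet G, φ s ∈ endSet G ∧ HasPath G s (φ s) ∧ HasPath G' s (φ s)) (s t : V) :
    (s ∈ startSet G ∧ t ∈ endSet G ∧ HasPath G s t) ↔
      (s ∈ startSet G' ∧ t ∈ endSet G' ∧ HasPath G' s t) := by
  rw [hS, hT]
  refine and_congr_right fun hs => and_congr_right fun ht => ?_
  obtain ⟨hφT, hpath, hpath'⟩ := hφ s hs
  constructor
  · intro h
    rwa [h.eq_of_endSet hout hpath ht hφT]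
  · intro h
    rwa [h.eq_of_endSet hout' hpath' (hT ▸ ht) (hT ▸ hφT)]

end Paths

/-- With `ia = [a₁, …, a_k]` and `ib = [b₁, …, b_k]`: the path `s₁ a₁ b₁ … a_k b_k (φ s₁)` and
the edges `s → φ s`, `s ∈ ss`. The first zip lists the edges from the `B`-side to the `A`-side,
the second those from the `A`-side to the `B`-side. -/
def pairingForest [DecidableEq V] (s₁ : V) (ss ia ib : List V) (φ : V → V) : Finset (V × V) :=
  ((s₁ :: ib ++ ss).zip (ia ++ φ s₁ :: ss.map φ)).toFinset ∪ (ia.zip ib).toFinset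

section PairingForest

variable {s₁ s : V} {ss ia ib : List V} {φ : V → V}

theorem zip_pairing_eq (hlen : ia.length = ib.length) :
    (s₁ :: ib ++ ss).zip (ia ++ φ s₁ :: ss.map φ) =
      (s₁ :: ib).zip (ia ++ [φ s₁]) ++ ss.map fun s => (s, φ s) := by
  have hzip : ss.zip (ss.map φ) = ss.map fun s => (s, φ s) := by
    simpa using List.zip_map' (f := id) (g := φ) (l := ss)
  rw [← hzip, ← List.zip_append (by simp [hlen])]
  simp

theorem length_pairingSources (hlen : ia.length = ib.length) :
    (s₁ :: ib ++ ss).length = (ia ++ φ s₁ :: ss.map φ).length := by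
  simp only [List.length_append, List.length_cons, List.length_map, hlen]
  omega

variable [DecidableEq V]

theorem pairingForest_subset_listEdges (hlen : ia.length = ib.length) :
    pairingForest s₁ ss ia ib φ ⊆
      listEdges ((s₁ :: ib ++ ss).interleave (ia ++ φ s₁ :: ss.map φ)) := by
  intro e he
  refine List.mem_toFinset.2 (List.mem_zip_tail_interleave
    (length_pairingSources hlen) ?_)
  rcases mem_union.1 he with he | he
  · exact .inl (List.mem_toFinset.1 he)
  · refine .inr ?_
    rw [List.cons_append, List.tail_cons, List.zip_append hlen]
    exact List.mem_append_left _ (List.mem_toFinset.1 he)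

theorem isLinearForest_pairingForest (hlen : ia.length = ib.length)
    (hnd : (s₁ :: ib ++ ss ++ (ia ++ φ s₁ :: ss.map φ)).Nodup) :
    IsLinearForest (pairingForest s₁ ss ia ib φ) :=
  (isLinearForest_listEdges (List.interleave_perm_append.nodup_iff.2 hnd)).mono
    (pairingForest_subset_listEdges hlen)

theorem mem_image_fst_pairingForest (hlen : ia.length = ib.length) {v : V} :
    v ∈ (pairingForest s₁ ss ia ib φ).image Prod.fst ↔ v ∈ s₁ :: ib ++ ss ∨ v ∈ ia := by
  rw [pairingForest, image_union, mem_union, List.mem_image_fst_zip_toFinset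
    (length_pairingSources hlen).le,
    List.mem_image_fst_zip_toFinset hlen.le]

theorem mem_image_snd_pairingForest (hlen : ia.length = ib.length) {v : V} :
    v ∈ (pairingForest s₁ ss ia ib φ).image Prod.snd ↔
      v ∈ ia ++ φ s₁ :: ss.map φ ∨ v ∈ ib := by
  rw [pairingForest, image_union, mem_union, List.mem_image_snd_zip_toFinset
    (length_pairingSources hlen).ge,
    List.mem_image_snd_zip_toFinset hlen.ge]

theorem hasPath_pairingForest_self (hlen : ia.length = ib.length)
    (hnd : (s₁ :: ib ++ ss ++ (ia ++ φ s₁ :: ss.map φ)).Nodup) :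
    HasPath (pairingForest s₁ ss ia ib φ) s₁ (φ s₁) := by
  have hpath : (s₁ :: ib).interleave (ia ++ [φ s₁]) = s₁ :: (ia.interleave ib ++ [φ s₁]) := by
    simp [hlen]
  have hsub : List.Sublist ((s₁ :: ib) ++ (ia ++ [φ s₁]))
      (s₁ :: ib ++ ss ++ (ia ++ φ s₁ :: ss.map φ)) :=
    (List.sublist_append_left _ _).append ((List.sublist_append_left [φ s₁] _).append_left ia)
  refine ⟨(s₁ :: ib).interleave (ia ++ [φ s₁]), ⟨by simp [hpath], ?_, ?_⟩, by simp [hpath],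
    by rw [hpath, ← List.cons_append, List.getLast?_concat]⟩
  · exact List.interleave_perm_append.nodup_iff.2 (hnd.sublist hsub)
  · refine (List.isChain_interleave_iff (by simp [hlen])).2 ⟨fun p hp => ?_, fun p hp => ?_⟩
    · refine mem_union_left _ (List.mem_toFinset.2 ?_)
      rw [zip_pairing_eq hlen]
      exact List.mem_append_left _ hp
    · refine mem_union_right _ (List.mem_toFinset.2 ?_)
      rw [List.tail_cons, ← List.append_nil ib, List.zip_append hlen] at hp
      simpa using hp

theorem hasPath_pairingForest_of_mem (hlen : ia.length = ib.length) (hs : s ∈ ss)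
    (hne : s ≠ φ s) : HasPath (pairingForest s₁ ss ia ib φ) s (φ s) := by
  have hedge : (s, φ s) ∈ pairingForest s₁ ss ia ib φ := by
    refine mem_union_left _ (List.mem_toFinset.2 ?_)
    rw [zip_pairing_eq hlen]
    exact List.mem_append_right _ (List.mem_map_of_mem hs)
  exact ⟨[s, φ s], ⟨le_rfl, by simpa using hne, .cons_cons hedge (.singleton _)⟩, rfl, rfl⟩

end PairingForest

section Construction

variable [DecidableEq V] {A B S T : Finset V} {φ : V → V} {s₁ : V}

theorem mem_pairingSources_iff (hSB : S ⊆ B) (hs₁ : s₁ ∈ S) {v : V} :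
    v ∈ s₁ :: (B \ S).toList ++ (S.erase s₁).toList ↔ v ∈ B := by
  simp only [List.cons_append, List.mem_cons, List.mem_append, mem_toList, mem_sdiff, mem_erase]
  grind

theorem mem_pairingTargets_iff (hTA : T ⊆ A) (hφS : S.image φ = T) (hs₁ : s₁ ∈ S) {v : V} :
    v ∈ (A \ T).toList ++ φ s₁ :: (S.erase s₁).toList.map φ ↔ v ∈ A := by
  simp only [List.mem_append, List.mem_cons, List.mem_map, mem_toList, mem_sdiff, mem_erase]
  grind

theorem nodup_pairingTargets (hφ : Set.InjOn φ S) (hφS : S.image φ = T) (hs₁ : s₁ ∈ S) :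
    ((A \ T).toList ++ φ s₁ :: (S.erase s₁).toList.map φ).Nodup := by
  have hS : ∀ v ∈ s₁ :: (S.erase s₁).toList, v ∈ S := by
    simp only [List.mem_cons, mem_toList, mem_erase]
    grind
  rw [← List.map_cons]
  refine List.nodup_append.2 ⟨nodup_toList _, ?_, ?_⟩
  · exact (List.nodup_cons.2 ⟨by simp, nodup_toList _⟩).map_on
      fun x hx y hy => hφ (hS x hx) (hS y hy)
  · simp only [mem_toList, mem_sdiff, List.mem_map]
    rintro a ⟨-, haT⟩ _ ⟨x, hx, rfl⟩ rfl
    exact haT (hφS ▸ mem_image_of_mem φ (hS x hx))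

theorem exists_bipartite_linearForest (hAB : Disjoint A B) (hSB : S ⊆ B) (hTA : T ⊆ A)
    (hcard : #A = #B) (hφ : Set.InjOn φ S) (hφS : S.image φ = T) (hS : S.Nonempty) :
    ∃ F' : Finset (V × V), IsLinearForest F' ∧
      (∀ e ∈ F', (e.1 ∈ A ∧ e.2 ∈ B) ∨ (e.1 ∈ B ∧ e.2 ∈ A)) ∧
      F'.image Prod.fst = (A ∪ B) \ T ∧ F'.image Prod.snd = (A ∪ B) \ S ∧
      ∀ s ∈ S, HasPath F' s (φ s) := by
  obtain ⟨s₁, hs₁⟩ := hS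
  have hxs := fun v => mem_pairingSources_iff (v := v) hSB hs₁
  have hys := fun v => mem_pairingTargets_iff (v := v) hTA hφS hs₁
  have hlen : (A \ T).toList.length = (B \ S).toList.length := by
    have hST : #S = #T := hφS ▸ (card_image_of_injOn hφ).symm
    simp only [length_toList, card_sdiff_of_subset hTA, card_sdiff_of_subset hSB, hcard, hST]
  have hnd : (s₁ :: (B \ S).toList ++ (S.erase s₁).toList ++
      ((A \ T).toList ++ φ s₁ :: (S.erase s₁).toList.map φ)).Nodup := by
    refine List.nodup_append.2 ⟨?_, nodup_pairingTargets hφ hφS hs₁, fun a ha b hb hab =>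
      disjoint_left.1 hAB ((hys b).1 hb) (hab ▸ (hxs a).1 ha)⟩
    simp only [List.cons_append, List.nodup_cons, List.nodup_append, List.mem_append, mem_toList,
      nodup_toList, mem_sdiff, mem_erase]
    grind
  refine ⟨pairingForest s₁ (S.erase s₁).toList (A \ T).toList (B \ S).toList φ,
    isLinearForest_pairingForest hlen hnd, ?_, ?_, ?_, fun s hs => ?_⟩
  · rintro ⟨a, b⟩ he
    rcases mem_union.1 he with he | he <;>
      obtain ⟨ha, hb⟩ := List.of_mem_zip (List.mem_toFinset.1 he)
    · exact .inr ⟨(hxs a).1 ha, (hys b).1 hb⟩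
    · exact .inl ⟨(mem_sdiff.1 (mem_toList.1 ha)).1, (mem_sdiff.1 (mem_toList.1 hb)).1⟩
  · ext v
    rw [mem_image_fst_pairingForest hlen, hxs]
    simp only [mem_toList, mem_sdiff, mem_union]
    grind
  · ext v
    rw [mem_image_snd_pairingForest hlen, hys]
    simp only [mem_toList, mem_sdiff, mem_union]
    grind
  · by_cases hs₁ : s = s₁
    · rw [hs₁]
      exact hasPath_pairingForest_self hlen hnd
    · refine hasPath_pairingForest_of_mem hlen (by simp [hs, hs₁]) fun h => ?_
      exact disjoint_left.1 hAB (hTA (hφS ▸ mem_image_of_mem φ hs)) (h ▸ hSB hs)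

end Construction

/-- Every spanning linear forest on `A ∪ B` (with `|A| = |B|`) whose
paths start in `B` and end in `A` is equivalent to a bipartite linear forest on the
vertex classes `A` and `B`: there is a linear forest `F'` with the same vertex set,
all of whose edges join `A` and `B`, whose components are in bijection with those of
`F` with the same starting and ending points. -/
theorem equivalent_bipartite_linear_forest {V : Type} [Fintype V] [DecidableEq V]
    (A B : Finset V)
    (hAB : Disjoint A B)
    (hcard : A.card = B.card)
    (F : Finset (V × V))
    (hF : IsLinearForest F)
    (hVF : verts F = A ∪ B)
    (hstart : startSet F ⊆ B)
    (hend : endSet F ⊆ A) :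
    ∃ F' : Finset (V × V),
      IsLinearForest F' ∧
      verts F' = A ∪ B ∧
      (∀ e ∈ F', (e.1 ∈ A ∧ e.2 ∈ B) ∨ (e.1 ∈ B ∧ e.2 ∈ A)) ∧
      -- components correspond: for all `s, t`, `F` has a component (maximal path)
      -- from `s` to `t` if and only if `F'` does
      (∀ s t : V,
        (s ∈ startSet F ∧ t ∈ endSet F ∧
          ∃ l : List V, IsPathList F l ∧ l.head? = some s ∧ l.getLast? = some t) ↔
        (s ∈ startSet F' ∧ t ∈ endSet F' ∧
          ∃ l : List V, IsPathList F' l ∧ l.head? = some s ∧ l.getLast? = some t)) ∧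
      startSet F' = startSet F ∧
      endSet F' = endSet F ∧
      interiorSet F' = interiorSet F := by
  choose! φ hφT hφF using fun s (hs : s ∈ startSet F) =>
    exists_hasPath_endSet hF ((mem_startSet_iff (hF.1 s) (hF.2.1 s)).1 hs).1
  have hinj : Set.InjOn φ (startSet F) := fun s hs s' hs' h =>
    (hφF s hs).eq_of_startSet hF.2.1 (h ▸ hφF s' hs') hs hs'
  have himage : (startSet F).image φ = endSet F :=
    eq_of_subset_of_card_le (image_subset_iff.2 hφT)
      (by rw [card_image_of_injOn hinj, card_startSet_eq_card_endSet hF.1 hF.2.1])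
  rcases (startSet F).eq_empty_or_nonempty with hS | hS
  · have hF₀ := eq_empty_of_startSet_eq_empty hF hS
    exact ⟨F, hF, hVF, by simp [hF₀], fun _ _ => Iff.rfl, rfl, rfl, rfl⟩
  obtain ⟨F', hF', hbip, hfst, hsnd, hφF'⟩ :=
    exists_bipartite_linearForest hAB hstart hend hcard hinj himage hS
  have hfst' : F'.image Prod.fst = F.image Prod.fst := by
    rw [hfst, image_fst_eq_verts_sdiff_endSet hF.1 hF.2.1, hVF]
  have hsnd' : F'.image Prod.snd = F.image Prod.snd := by
    rw [hsnd, image_snd_eq_verts_sdiff_startSet hF.1 hF.2.1, hVF]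
  obtain ⟨hS', hT', hI'⟩ := degreeSets_eq_of_image_eq hF.1 hF.2.1 hF'.1 hF'.2.1 hfst' hsnd'
  refine ⟨F', hF', by rw [← hVF, verts, verts, hfst', hsnd'], hbip,
    and_hasPath_iff_of_pairing hF.1 hF'.1 hS' hT' fun s hs => ⟨hφT s hs, hφF s hs, hφF' s hs⟩,
    hS', hT', hI'⟩
end

section
/- Let V be a finite set, let F be a linear forest with V(F) = V, and let W ⊆ V with |W| ≥ 2 and V⁺(F) ∪ V⁻(F) ⊆ W. Let F̃ be the digraph on vertex set W having an edge from u to v if and only if F contains a directed path from u to v all of whose internal vertices lie outside W. Let C̃ be a directed Hamilton cycle on the vertex set W such that F̃ ⊆ C̃ and no edge of C̃ outside F̃ is an edge of F. Then (C̃ ∖ F̃) ∪ F is a directed Hamilton cycle on V. -/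
open Finset

variable {V : Type}

/-!
In `D = (C̃ ∖ F̃) ∪ F` every vertex has exactly one out-neighbour: its `F`-successor if it has
one, its `C̃`-successor otherwise. Indeed, if `w ∈ W` has an `F`-successor, the `F`-path from `w`
runs through `V ∖ W` until it hits `W` (`F` is acyclic), so it contracts to the edge `w → C̃(w)`
of `F̃`, which is then not in `D`. Hence `D` is the graph of a map `σ`, and `σ` leads from each
`w ∈ W` to `C̃(w)` in at least one step, so the points of `W` lie on one periodic `σ`-orbit. Every
vertex outside `W` is the `σ`-image of its `F`-predecessor, and every `σ`-orbit enters `W`; by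
finiteness this forces the periodic orbit to be all of `V`, i.e. `D` is a Hamilton cycle.
-/

open Function

section Cycles

variable {F : Finset (V × V)}

theorem hasCycle_of_cycle_chain {l : List V} (hne : l ≠ []) (hnd : l.Nodup)
    (hc : (l : Cycle V).Chain fun a b => (a, b) ∈ F) : HasCycle F := by
  obtain _ | ⟨v, l⟩ := l
  · exact absurd rfl hne
  · rw [Cycle.chain_coe_cons, ← List.cons_append, List.isChain_append] at hc
    exact ⟨v, l, hnd, hc.1, hc.2.2 _ (List.getLast?_eq_some_getLast _) _ rfl⟩

theorem hasCycle_of_isPeriodicPt {g : V → V} {x : V} {m : ℕ} (hm : 0 < m)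
    (hx : IsPeriodicPt g m x) (hF : ∀ k < m, (g^[k] x, g^[k + 1] x) ∈ F) : HasCycle F :=
  hasCycle_of_cycle_chain
    (by simpa using (hx.minimalPeriod_pos hm).ne')
    nodup_periodicOrbit
    ((periodicOrbit_chain _).2 fun k hk => hF k (hk.trans_le (hx.minimalPeriod_le hm)))

theorem iterate_injOn_Iic_of_not_hasCycle (hF : ¬HasCycle F) {g : V → V} {x : V} {n : ℕ}
    (hedge : ∀ k < n, (g^[k] x, g^[k + 1] x) ∈ F) : Set.InjOn (g^[·] x) (Set.Iic n) := by
  suffices ∀ i j, i < j → j ≤ n → g^[i] x ≠ g^[j] x by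
    intro i hi j hj hij
    by_contra hne
    obtain h | h := Nat.lt_or_gt_of_ne hne
    · exact this i j h hj hij
    · exact this j i h hi hij.symm
  intro i j hij hjn heq
  refine hF (hasCycle_of_isPeriodicPt (g := g) (x := g^[i] x) (Nat.sub_pos_of_lt hij) ?_ ?_)
  · rw [IsPeriodicPt, IsFixedPt, ← iterate_add_apply, Nat.sub_add_cancel hij.le, heq]
  · intro k hk
    rw [← iterate_add_apply, ← iterate_add_apply, Nat.add_right_comm]
    exact hedge (k + i) (by omega)

theorem exists_iterate_mem_of_not_hasCycle [Finite V] (hF : ¬HasCycle F) {W : Set V}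
    {g : V → V} (hg : ∀ y ∉ W, (y, g y) ∈ F) (x : V) : ∃ n, g^[n] x ∈ W := by
  by_contra! h
  obtain ⟨i, j, hne, heq⟩ := Finite.exists_ne_map_eq_of_infinite (g^[·] x)
  have hinj := iterate_injOn_Iic_of_not_hasCycle hF (n := max i j) fun k _ => by
    rw [iterate_succ_apply']; exact hg _ (h k)
  exact hne (hinj (Set.mem_Iic.2 (le_max_left i j)) (Set.mem_Iic.2 (le_max_right i j)) heq)

end Cycles

section HamiltonCycles

variable [DecidableEq V]

theorem mem_cycleEdges {l : List V} {a b : V} :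
    (a, b) ∈ cycleEdges l ↔ ∃ (i : ℕ) (h : i < l.length),
      l[i] = a ∧ l[(i + 1) % l.length]'(Nat.mod_lt _ (by omega)) = b := by
  simp only [cycleEdges, List.mem_toFinset, List.mem_iff_getElem, List.getElem_zip,
    List.getElem_rotate, List.length_zip, List.length_rotate, min_self, Prod.mk.injEq]

theorem isHamCycleOn_iff {C : Finset (V × V)} {X : Finset V} :
    IsHamCycleOn C X ↔ ∃ (c : V → V) (x : V), x ∈ periodicPts c ∧
      (∀ y, y ∈ X ↔ ∃ n, c^[n] x = y) ∧ ∀ a b, (a, b) ∈ C ↔ a ∈ X ∧ c a = b := by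
  constructor
  · rintro ⟨l, hne, hnd, rfl, rfl⟩
    have hpos : 0 < l.length := List.length_pos_iff.2 hne
    have hpow (n : ℕ) : l.formPerm^[n] l[0] = l[n % l.length]'(Nat.mod_lt _ hpos) := by
      rw [Equiv.Perm.iterate_eq_pow, List.formPerm_pow_apply_getElem _ hnd, zero_add]
    refine ⟨l.formPerm, l[0], mk_mem_periodicPts hpos ?_, fun y => ?_, fun a b => ?_⟩
    · rw [IsPeriodicPt, IsFixedPt, hpow]
      simp
    · simp only [List.mem_toFinset, List.mem_iff_getElem, hpow]
      exact ⟨fun ⟨i, hi, h⟩ => ⟨i, by simpa [Nat.mod_eq_of_lt hi] using h⟩, fun ⟨n, h⟩ => ⟨_, _, h⟩⟩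
    · simp only [mem_cycleEdges, List.mem_toFinset, List.mem_iff_getElem]
      constructor
      · rintro ⟨i, hi, rfl, rfl⟩
        exact ⟨⟨i, hi, rfl⟩, List.formPerm_apply_getElem l hnd i hi⟩
      · rintro ⟨⟨i, hi, rfl⟩, rfl⟩
        exact ⟨i, hi, rfl, (List.formPerm_apply_getElem l hnd i hi).symm⟩
  · rintro ⟨c, x, hx, hX, hC⟩
    have hp := minimalPeriod_pos_of_mem_periodicPts hx
    refine ⟨(List.range (minimalPeriod c x)).map (c^[·] x), by simp [hp.ne'],
      nodup_periodicOrbit, ?_, ?_⟩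
    · ext y
      rw [List.mem_toFinset, ← Cycle.mem_coe_iff, ← periodicOrbit_def, mem_periodicOrbit_iff hx,
        hX]
    · ext ⟨a, b⟩
      simp only [hC, mem_cycleEdges, List.length_map, List.length_range, List.getElem_map,
        List.getElem_range, iterate_mod_minimalPeriod_eq, iterate_succ_apply']
      constructor
      · rintro ⟨ha, rfl⟩
        obtain ⟨n, rfl⟩ := (hX a).1 ha
        exact ⟨n % minimalPeriod c x, Nat.mod_lt _ hp, by simp [iterate_mod_minimalPeriod_eq]⟩
      · rintro ⟨i, -, rfl, rfl⟩
        exact ⟨(hX _).2 ⟨i, rfl⟩, rfl⟩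

end HamiltonCycles

section Degrees

variable [DecidableEq V] {F : Finset (V × V)}

theorem eq_of_outDeg_le_one {a b b' : V} (h : outDeg F a ≤ 1) (hb : (a, b) ∈ F)
    (hb' : (a, b') ∈ F) : b = b' :=
  congrArg Prod.snd (Finset.card_le_one.1 h (a, b) (by simp [hb]) (a, b') (by simp [hb']))

theorem outDeg_pos_iff_s6 {v : V} : 0 < outDeg F v ↔ ∃ b, (v, b) ∈ F := by
  simp [outDeg, Finset.card_pos, Finset.filter_nonempty_iff]

theorem inDeg_pos_iff_s6 {v : V} : 0 < inDeg F v ↔ ∃ a, (a, v) ∈ F := by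
  simp [inDeg, Finset.card_pos, Finset.filter_nonempty_iff]

theorem exists_succ_and_pred_of_mem_verts [Fintype V] {v : V} (hout : outDeg F v ≤ 1)
    (hin : inDeg F v ≤ 1) (hv : v ∈ verts F) (hs : v ∉ startSet F) (he : v ∉ endSet F) :
    (∃ b, (v, b) ∈ F) ∧ ∃ a, (a, v) ∈ F := by
  rw [← outDeg_pos_iff_s6, ← inDeg_pos_iff_s6]
  have : 0 < outDeg F v ∨ 0 < inDeg F v := by
    simp only [verts, Finset.mem_union, Finset.mem_image, Prod.exists, exists_and_right,
      exists_eq_right, outDeg_pos_iff_s6, inDeg_pos_iff_s6] at hv ⊢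
    exact hv
  simp only [startSet, endSet, Finset.mem_filter, Finset.mem_univ, true_and] at hs he
  omega

end Degrees

section Contraction

variable {F : Finset (V × V)} {W : Finset V}

variable (F W) in
/-- `u → v` is an edge of the contraction `F̃` of `F` onto `W`. -/
def IsContractedEdge (u v : V) : Prop :=
  u ∈ W ∧ v ∈ W ∧ ∃ l : List V, IsPathList F l ∧ l.head? = some u ∧ l.getLast? = some v ∧
    ∀ x ∈ l.tail.dropLast, x ∉ W

theorem IsContractedEdge.exists_mem {u v : V} (h : IsContractedEdge F W u v) :
    ∃ b, (u, b) ∈ F := by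
  obtain ⟨-, -, _ | ⟨a, _ | ⟨b, l⟩⟩, ⟨hlen, -, hc⟩, hhead, -⟩ := h
  · simp at hlen
  · simp at hlen
  · obtain rfl : a = u := Option.some_injective _ hhead
    exact ⟨b, (List.isChain_cons_cons.1 hc).1⟩

theorem isContractedEdge_iterate (hF : ¬HasCycle F) {g : V → V} {x : V} {n : ℕ} (hn : 0 < n)
    (hx : x ∈ W) (hxn : g^[n] x ∈ W) (hedge : ∀ k < n, (g^[k] x, g^[k + 1] x) ∈ F)
    (hint : ∀ k, 0 < k → k < n → g^[k] x ∉ W) : IsContractedEdge F W x (g^[n] x) := by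
  obtain ⟨m, rfl⟩ : ∃ m, n = m + 1 := ⟨n - 1, by omega⟩
  refine ⟨hx, hxn, (List.range (m + 2)).map (g^[·] x), ⟨by simp, ?_, ?_⟩, by simp,
    by rw [List.getLast?_map, List.getLast?_range]; simp, ?_⟩
  · refine (List.nodup_map_iff_inj_on List.nodup_range).2 fun i hi j hj hij => ?_
    rw [List.mem_range] at hi hj
    exact iterate_injOn_Iic_of_not_hasCycle hF hedge (Set.mem_Iic.2 (by omega))
      (Set.mem_Iic.2 (by omega)) hij
  · exact (List.isChain_map _).2 ((List.isChain_range_succ _ _).2 hedge)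
  · intro y hy
    rw [List.range_succ_eq_map, List.range_succ] at hy
    simp only [List.map_cons, List.map_append, List.tail_cons, List.map_map, List.map_nil,
      List.dropLast_concat, List.mem_map, List.mem_range, Function.comp_apply] at hy
    obtain ⟨k, hk, rfl⟩ := hy
    exact hint (k + 1) k.succ_pos (by omega)

theorem exists_isContractedEdge [Finite V] (hF : ¬HasCycle F)
    (hsrc : ∀ y ∉ W, ∃ b, (y, b) ∈ F) {v b : V} (hv : v ∈ W) (hb : (v, b) ∈ F) :
    ∃ w, IsContractedEdge F W v w := by
  classical
  obtain ⟨g, hg⟩ : ∃ g : V → V, ∀ y, (∃ b, (y, b) ∈ F) → (y, g y) ∈ F :=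
    ⟨fun y => if h : ∃ b, (y, b) ∈ F then h.choose else y,
      fun y h => by simpa [dif_pos h] using h.choose_spec⟩
  have hgW (y : V) (hy : y ∉ W) : (y, g y) ∈ F := hg y (hsrc y hy)
  have hex : ∃ n, 0 < n ∧ g^[n] v ∈ W := by
    obtain ⟨n, hn⟩ := exists_iterate_mem_of_not_hasCycle (W := W) hF hgW (g v)
    exact ⟨n + 1, n.succ_pos, by rwa [iterate_succ_apply]⟩
  have hint (k : ℕ) (hk : 0 < k) (hlt : k < Nat.find hex) : g^[k] v ∉ W :=
    fun hkW => Nat.find_min hex hlt ⟨hk, hkW⟩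
  obtain ⟨hpos, hW⟩ := Nat.find_spec hex
  refine ⟨_, isContractedEdge_iterate hF hpos hv hW (fun k hk => ?_) hint⟩
  rw [iterate_succ_apply']
  rcases k.eq_zero_or_pos with rfl | hk0
  · exact hg v ⟨b, hb⟩
  · exact hgW _ (hint k hk0 hk)

theorem mem_contraction_iff_exists_mem [Finite V] {Ft Ct : Finset (V × V)} {c : V → V}
    (hF : ¬HasCycle F) (hsrc : ∀ y ∉ W, ∃ b, (y, b) ∈ F)
    (hFt : ∀ u v, (u, v) ∈ Ft ↔ IsContractedEdge F W u v)
    (hCt : ∀ a b, (a, b) ∈ Ct ↔ a ∈ W ∧ c a = b) (hsub : Ft ⊆ Ct) {v : V} (hv : v ∈ W) :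
    (v, c v) ∈ Ft ↔ ∃ b, (v, b) ∈ F := by
  refine ⟨fun h => ((hFt v (c v)).1 h).exists_mem, fun ⟨b, hb⟩ => ?_⟩
  obtain ⟨w, hw⟩ := exists_isContractedEdge hF hsrc hv hb
  obtain ⟨-, rfl⟩ := (hCt v w).1 (hsub ((hFt v w).2 hw))
  exact (hFt v (c v)).2 hw

end Contraction

section Orbits

theorem iterate_length_sub_one_of_isChain {σ : V → V} {l : List V} {a b : V}
    (hl : l.IsChain fun x y => σ x = y) (ha : l.head? = some a) (hb : l.getLast? = some b) :
    σ^[l.length - 1] a = b := by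
  induction l generalizing a with
  | nil => simp at ha
  | cons x t ih =>
    obtain rfl : x = a := Option.some_injective _ ha
    obtain _ | ⟨y, t⟩ := t
    · simpa using hb
    · obtain ⟨rfl, hl⟩ := List.isChain_cons_cons.1 hl
      rw [List.getLast?_cons_cons] at hb
      simpa using ih hl rfl hb

theorem exists_ge_iterate_eq_iterate {σ c : V → V} {x : V}
    (h : ∀ k, ∃ n > 0, σ^[n] (c^[k] x) = c (c^[k] x)) (k : ℕ) :
    ∃ n ≥ k, σ^[n] x = c^[k] x := by
  induction k with
  | zero => exact ⟨0, le_rfl, rfl⟩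
  | succ k ih =>
    obtain ⟨n, hn, hnx⟩ := ih
    obtain ⟨m, hm, hmx⟩ := h k
    exact ⟨m + n, by omega, by rw [iterate_add_apply, hnx, hmx, iterate_succ_apply']⟩

/-- The points not reachable from `x` lie outside `S`, so each is the `σ`-image of another one;
by finiteness `σ` then maps this set into itself, so it is empty since every orbit enters `S`. -/
theorem exists_iterate_eq_of_forall_iterate_mem [Finite V] {σ : V → V} {S : Set V} {x : V}
    (hS : ∀ y ∈ S, ∃ n, σ^[n] x = y) (hpre : ∀ y ∉ S, ∃ a, σ a = y)
    (hhit : ∀ u, ∃ n, σ^[n] u ∈ S) (y : V) : ∃ n, σ^[n] x = y := by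
  classical
  have := Fintype.ofFinite V
  by_contra hy
  set U := Finset.univ.filter fun z => ¬∃ n, σ^[n] x = z
  have hU (z : V) : z ∈ U ↔ ¬∃ n, σ^[n] x = z := by simp [U]
  have hsub : U ⊆ U.image σ := by
    intro z hz
    obtain ⟨a, rfl⟩ := hpre z fun hzS => (hU z).1 hz (hS z hzS)
    refine Finset.mem_image_of_mem σ ((hU a).2 fun ⟨n, hn⟩ => (hU _).1 hz ⟨n + 1, ?_⟩)
    rw [iterate_succ_apply', hn]
  have hmaps : Set.MapsTo σ U U := by
    intro z hz
    rw [Finset.mem_coe, Finset.eq_of_subset_of_card_le hsub Finset.card_image_le]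
    exact Finset.mem_image_of_mem σ hz
  obtain ⟨n, hn⟩ := hhit y
  exact (hU _).1 (hmaps.iterate n ((hU y).2 hy)) (hS _ hn)

end Orbits

section Splicing

variable [DecidableEq V] {F Ft Ct : Finset (V × V)} {W : Finset V} {c : V → V}

theorem exists_fun_mem_sdiff_union_iff (hout : ∀ v, outDeg F v ≤ 1)
    (hsrc : ∀ y ∉ W, ∃ b, (y, b) ∈ F) (hCt : ∀ a b, (a, b) ∈ Ct ↔ a ∈ W ∧ c a = b)
    (hFt : ∀ v ∈ W, (v, c v) ∈ Ft ↔ ∃ b, (v, b) ∈ F) :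
    ∃ σ : V → V, ∀ a b, (a, b) ∈ (Ct \ Ft) ∪ F ↔ σ a = b := by
  have hmem (a b : V) :
      (a, b) ∈ (Ct \ Ft) ∪ F ↔ (a, b) ∈ F ∨ (¬∃ b', (a, b') ∈ F) ∧ a ∈ W ∧ c a = b := by
    simp only [Finset.mem_union, Finset.mem_sdiff, hCt]
    constructor
    · rintro (⟨⟨ha, rfl⟩, hn⟩ | h)
      · exact Or.inr ⟨fun h => hn ((hFt a ha).2 h), ha, rfl⟩
      · exact Or.inl h
    · rintro (h | ⟨hn, ha, rfl⟩)
      · exact Or.inr h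
      · exact Or.inl ⟨⟨ha, rfl⟩, fun h => hn ((hFt a ha).1 h)⟩
  have hunique (a : V) : ∃! b, (a, b) ∈ (Ct \ Ft) ∪ F := by
    by_cases h : ∃ b, (a, b) ∈ F
    · obtain ⟨b, hb⟩ := h
      refine ⟨b, (hmem a b).2 (Or.inl hb), fun b' hb' => ?_⟩
      rcases (hmem a b').1 hb' with h' | ⟨hn, -⟩
      · exact eq_of_outDeg_le_one (hout a) h' hb
      · exact absurd ⟨b, hb⟩ hn
    · have ha : a ∈ W := by_contra fun haW => h (hsrc a haW)
      refine ⟨c a, (hmem a (c a)).2 (Or.inr ⟨h, ha, rfl⟩), fun b' hb' => ?_⟩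
      rcases (hmem a b').1 hb' with h' | ⟨-, -, rfl⟩
      · exact absurd ⟨b', h'⟩ h
      · rfl
  choose σ hσ using hunique
  exact ⟨σ, fun a b => ⟨fun h => ((hσ a).2 b h).symm, fun h => h ▸ (hσ a).1⟩⟩

theorem exists_pos_iterate_eq_apply {σ : V → V} (hσ : ∀ a b, (a, b) ∈ (Ct \ Ft) ∪ F ↔ σ a = b)
    (hFt : ∀ u v, (u, v) ∈ Ft ↔ IsContractedEdge F W u v)
    (hCt : ∀ a b, (a, b) ∈ Ct ↔ a ∈ W ∧ c a = b) {w : V} (hw : w ∈ W) :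
    ∃ n > 0, σ^[n] w = c w := by
  by_cases h : (w, c w) ∈ Ft
  · obtain ⟨-, -, l, ⟨hlen, -, hl⟩, hhead, hlast, -⟩ := (hFt w (c w)).1 h
    refine ⟨l.length - 1, by omega, iterate_length_sub_one_of_isChain ?_ hhead hlast⟩
    exact hl.imp fun a b hab => (hσ a b).1 (Finset.mem_union_right _ hab)
  · exact ⟨1, one_pos, (hσ w (c w)).1
      (Finset.mem_union_left _ (Finset.mem_sdiff.2 ⟨(hCt w _).2 ⟨hw, rfl⟩, h⟩))⟩

end Splicing

theorem close_forest_into_hamilton_cycle_general {V : Type} [Fintype V] [DecidableEq V]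
    (F : Finset (V × V))
    (hF : IsLinearForest F)
    (hVF : verts F = Finset.univ)
    (W : Finset V)
    (hWends : startSet F ∪ endSet F ⊆ W)
    (Ft : Finset (V × V))
    (hFt : ∀ u v : V, (u, v) ∈ Ft ↔
      (u ∈ W ∧ v ∈ W ∧
        ∃ l : List V, IsPathList F l ∧ l.head? = some u ∧ l.getLast? = some v ∧
          ∀ x ∈ l.tail.dropLast, x ∉ W))
    (Ct : Finset (V × V))
    (hCt : IsHamCycleOn Ct W)
    (hsub : Ft ⊆ Ct) :
    IsHamCycleOn ((Ct \ Ft) ∪ F) Finset.univ := by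
  obtain ⟨hout, hin, hacyc⟩ := hF
  have hdeg (v : V) (hv : v ∉ W) : (∃ b, (v, b) ∈ F) ∧ ∃ a, (a, v) ∈ F :=
    exists_succ_and_pred_of_mem_verts (hout v) (hin v) (hVF ▸ Finset.mem_univ v)
      (fun h => hv (hWends (Finset.mem_union_left _ h)))
      (fun h => hv (hWends (Finset.mem_union_right _ h)))
  have hsrc (v : V) (hv : v ∉ W) : ∃ b, (v, b) ∈ F := (hdeg v hv).1
  obtain ⟨c, x, hx, hW, hCt⟩ := isHamCycleOn_iff.1 hCt
  obtain ⟨σ, hσ⟩ := exists_fun_mem_sdiff_union_iff hout hsrc hCt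
    fun v hv => mem_contraction_iff_exists_mem hacyc hsrc hFt hCt hsub hv
  have hσF (a b : V) (h : (a, b) ∈ F) : σ a = b := (hσ a b).1 (Finset.mem_union_right _ h)
  have horbit := exists_ge_iterate_eq_iterate fun k =>
    exists_pos_iterate_eq_apply hσ hFt hCt ((hW _).2 ⟨k, rfl⟩)
  obtain ⟨m, hm, hxm⟩ := hx
  obtain ⟨n, hn, hσn⟩ := horbit m
  refine isHamCycleOn_iff.2 ⟨σ, x, mk_mem_periodicPts (by omega) (hσn.trans hxm),
    fun y => ?_, fun a b => by simp [hσ]⟩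
  simp only [Finset.mem_univ, true_iff]
  refine exists_iterate_eq_of_forall_iterate_mem (S := W) (fun y hy => ?_) (fun y hy => ?_)
    (exists_iterate_mem_of_not_hasCycle hacyc fun y hy => ?_) y
  · obtain ⟨k, rfl⟩ := (hW y).1 hy
    obtain ⟨n, -, h⟩ := horbit k
    exact ⟨n, h⟩
  · obtain ⟨a, ha⟩ := (hdeg y hy).2
    exact ⟨a, hσF a y ha⟩
  · obtain ⟨b, hb⟩ := hsrc y hy
    rwa [hσF y b hb]

/-- If `F̃` is the contraction of a spanning linear forest `F`
onto a set `W` containing all endpoints of its paths, and `C̃` is a Hamilton cycle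
on `W` containing `F̃` whose remaining edges avoid `F`, then `(C̃ ∖ F̃) ∪ F` is a
Hamilton cycle on the whole vertex set. -/
theorem close_forest_into_hamilton_cycle {V : Type} [Fintype V] [DecidableEq V]
    (F : Finset (V × V))
    (hF : IsLinearForest F)
    (hVF : verts F = Finset.univ)
    (W : Finset V)
    (hWcard : 2 ≤ W.card)
    (hWends : startSet F ∪ endSet F ⊆ W)
    (Ft : Finset (V × V))
    (hFt : ∀ u v : V, (u, v) ∈ Ft ↔
      (u ∈ W ∧ v ∈ W ∧
        ∃ l : List V, IsPathList F l ∧ l.head? = some u ∧ l.getLast? = some v ∧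
          ∀ x ∈ l.tail.dropLast, x ∉ W))
    (Ct : Finset (V × V))
    (hCt : IsHamCycleOn Ct W)
    (hsub : Ft ⊆ Ct)
    (hdisj : Disjoint (Ct \ Ft) F) :
    IsHamCycleOn ((Ct \ Ft) ∪ F) Finset.univ :=
  close_forest_into_hamilton_cycle_general F hF hVF W hWends Ft hFt Ct hCt hsub
end

section
/- Let V be a finite set partitioned into U₁, U₂, U₃, U₄ and let U* ⊆ V satisfy |U* ∩ U₁| = |U* ∩ U₂| = |U* ∩ U₃| = |U* ∩ U₄|. Let F be a linear forest on V such that every edge of F joins two consecutive classes U_i and U_{i+1} (indices mod 4, in either direction), every vertex of U* has in-degree and out-degree exactly 1 in F, and the number of edges of F directed from U_{i+1} to U_i is the same for every i ∈ [4]. Then for each i ∈ {1,2,3}, the number of vertices v ∈ U_i∖U* with d_F⁺(v) = 1 equals the number of vertices v ∈ U_{i+1}∖U* with d_F⁻(v) = 1. -/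
open Finset

variable {V : Type}

/-!
Summing out-degrees over a class `U i` counts the edges leaving it; these go to the two
neighbouring classes `U (i + 1)` and `U (i - 1)`. Likewise the in-degrees over `U (i + 1)` count the
edges from `U i` and from `U (i + 2)`. The forward edges `U i → U (i + 1)` are common to both
counts, the backward edges `U i → U (i - 1)` and `U (i + 2) → U (i + 1)` are equinumerous by
hypothesis, and the vertices of `U*`, which contribute exactly one to each count, are equally many
in `U i` and `U (i + 1)`.
-/

open Function

section Counting

variable [DecidableEq V]

lemma sum_outDeg (F : Finset (V × V)) (S : Finset V) :
    ∑ v ∈ S, outDeg F v = #(F.filter (·.1 ∈ S)) :=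
  sum_card_fiberwise_eq_card_filter F S Prod.fst

lemma sum_inDeg (F : Finset (V × V)) (S : Finset V) :
    ∑ v ∈ S, inDeg F v = #(F.filter (·.2 ∈ S)) :=
  sum_card_fiberwise_eq_card_filter F S Prod.snd

lemma card_filter_fst_mem_eq_eCount_add {F : Finset (V × V)} {X Y Z : Finset V}
    (hYZ : Disjoint Y Z) (h : ∀ e ∈ F, e.1 ∈ X → e.2 ∈ Y ∨ e.2 ∈ Z) :
    #(F.filter (·.1 ∈ X)) = eCount F X Y + eCount F X Z := by
  have hsplit : F.filter (·.1 ∈ X) = F.filter (fun e => e.1 ∈ X ∧ e.2 ∈ Y ∨ e.1 ∈ X ∧ e.2 ∈ Z) :=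
    filter_congr fun e he => by have := h e he; tauto
  rw [hsplit, filter_or, card_union_of_disjoint]
  · rfl
  · exact disjoint_filter.2 fun e _ hy hz => disjoint_left.1 hYZ hy.2 hz.2

lemma card_filter_snd_mem_eq_eCount_add {F : Finset (V × V)} {X Y Z : Finset V}
    (hYZ : Disjoint Y Z) (h : ∀ e ∈ F, e.2 ∈ X → e.1 ∈ Y ∨ e.1 ∈ Z) :
    #(F.filter (·.2 ∈ X)) = eCount F Y X + eCount F Z X := by
  have hsplit : F.filter (·.2 ∈ X) = F.filter (fun e => e.1 ∈ Y ∧ e.2 ∈ X ∨ e.1 ∈ Z ∧ e.2 ∈ X) :=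
    filter_congr fun e he => by have := h e he; tauto
  rw [hsplit, filter_or, card_union_of_disjoint]
  · rfl
  · exact disjoint_filter.2 fun e _ hy hz => disjoint_left.1 hYZ hy.1 hz.1

omit [DecidableEq V] in
lemma card_filter_eq_one_eq_sum {S : Finset V} {d : V → ℕ} (hd : ∀ v, d v ≤ 1) :
    #(S.filter (d · = 1)) = ∑ v ∈ S, d v := by
  rw [card_filter]
  refine sum_congr rfl fun v _ => ?_
  rcases Nat.le_one_iff_eq_zero_or_eq_one.mp (hd v) with h | h <;> simp [h]

lemma card_filter_sdiff_add_card_inter {S T : Finset V} {p : V → Prop} [DecidablePred p]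
    (hT : ∀ v ∈ T, p v) :
    #((S \ T).filter p) + #(T ∩ S) = #(S.filter p) := by
  rw [← card_sdiff_add_card_inter (S.filter p) T]
  congr 2 <;> ext v <;> simp only [mem_sdiff, mem_inter, mem_filter]
  · tauto
  · have := hT v
    tauto

end Counting

section CyclicPartition

variable {ι : Type*} [AddCommGroup ι] [One ι]

lemma add_one_ne_sub_one (htwo : (1 : ι) + 1 ≠ 0) (i : ι) : i + 1 ≠ i - 1 := by
  intro h
  have : (1 : ι) + 1 = (i + 1) - (i - 1) := by abel
  exact htwo (by rw [this, h, sub_self])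

def JoinsConsecutive (U : ι → Finset V) (F : Finset (V × V)) : Prop :=
  ∀ e ∈ F, ∃ i, (e.1 ∈ U i ∧ e.2 ∈ U (i + 1)) ∨ (e.1 ∈ U (i + 1) ∧ e.2 ∈ U i)

variable {U : ι → Finset V} {F : Finset (V × V)}

lemma JoinsConsecutive.snd_mem (hU : Pairwise (Disjoint on U)) (hF : JoinsConsecutive U F)
    {e : V × V} (he : e ∈ F) {i : ι} (h1 : e.1 ∈ U i) :
    e.2 ∈ U (i + 1) ∨ e.2 ∈ U (i - 1) := by
  obtain ⟨k, ⟨hk1, hk2⟩ | ⟨hk1, hk2⟩⟩ := hF e he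
  · obtain rfl : k = i := hU.eq (not_disjoint_iff.2 ⟨e.1, hk1, h1⟩)
    exact Or.inl hk2
  · obtain rfl : k + 1 = i := hU.eq (not_disjoint_iff.2 ⟨e.1, hk1, h1⟩)
    rw [add_sub_cancel_right]
    exact Or.inr hk2

lemma JoinsConsecutive.fst_mem (hU : Pairwise (Disjoint on U)) (hF : JoinsConsecutive U F)
    {e : V × V} (he : e ∈ F) {i : ι} (h2 : e.2 ∈ U i) :
    e.1 ∈ U (i - 1) ∨ e.1 ∈ U (i + 1) := by
  obtain ⟨k, ⟨hk1, hk2⟩ | ⟨hk1, hk2⟩⟩ := hF e he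
  · obtain rfl : k + 1 = i := hU.eq (not_disjoint_iff.2 ⟨e.2, hk2, h2⟩)
    rw [add_sub_cancel_right]
    exact Or.inl hk1
  · obtain rfl : k = i := hU.eq (not_disjoint_iff.2 ⟨e.2, hk2, h2⟩)
    exact Or.inr hk1

variable [DecidableEq V]

lemma JoinsConsecutive.sum_outDeg (hU : Pairwise (Disjoint on U)) (hF : JoinsConsecutive U F)
    (htwo : (1 : ι) + 1 ≠ 0) (i : ι) :
    ∑ v ∈ U i, outDeg F v = eCount F (U i) (U (i + 1)) + eCount F (U i) (U (i - 1)) :=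
  (_root_.sum_outDeg F _).trans <| card_filter_fst_mem_eq_eCount_add
    (hU (add_one_ne_sub_one htwo i)) fun _ he => hF.snd_mem hU he

lemma JoinsConsecutive.sum_inDeg (hU : Pairwise (Disjoint on U)) (hF : JoinsConsecutive U F)
    (htwo : (1 : ι) + 1 ≠ 0) (i : ι) :
    ∑ v ∈ U i, inDeg F v = eCount F (U (i - 1)) (U i) + eCount F (U (i + 1)) (U i) :=
  (_root_.sum_inDeg F _).trans <| card_filter_snd_mem_eq_eCount_add
    (hU (add_one_ne_sub_one htwo i).symm) fun _ he => hF.fst_mem hU he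

end CyclicPartition

theorem matched_degree_counts_general {V : Type} [Fintype V] [DecidableEq V]
    (U : Fin 4 → Finset V) (Ustar : Finset V)
    (hdisj : ∀ i j, i ≠ j → Disjoint (U i) (U j))
    (hbal : ∀ i j : Fin 4, (Ustar ∩ U i).card = (Ustar ∩ U j).card)
    (F : Finset (V × V))
    (hF : IsLinearForest F)
    (hcons : ∀ e ∈ F, ∃ i : Fin 4,
      (e.1 ∈ U i ∧ e.2 ∈ U (i + 1)) ∨ (e.1 ∈ U (i + 1) ∧ e.2 ∈ U i))
    (hdeg : ∀ v ∈ Ustar, outDeg F v = 1 ∧ inDeg F v = 1)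
    (hback : ∀ i j : Fin 4, eCount F (U (i + 1)) (U i) = eCount F (U (j + 1)) (U j)) :
    ∀ i : Fin 4, i ≠ 3 →
      ((U i \ Ustar).filter (fun v => outDeg F v = 1)).card =
        ((U (i + 1) \ Ustar).filter (fun v => inDeg F v = 1)).card := by
  intro i _
  have hU : Pairwise (Disjoint on U) := fun a b => hdisj a b
  have hcons : JoinsConsecutive U F := hcons
  have htwo : (1 : Fin 4) + 1 ≠ 0 := by decide
  have hout := hcons.sum_outDeg hU htwo i
  have hin := hcons.sum_inDeg hU htwo (i + 1)
  rw [add_sub_cancel_right] at hin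
  have hbackward : eCount F (U i) (U (i - 1)) = eCount F (U (i + 1 + 1)) (U (i + 1)) := by
    simpa only [sub_add_cancel] using hback (i - 1) (i + 1)
  have hstar_out := card_filter_sdiff_add_card_inter (S := U i) fun v hv => (hdeg v hv).1
  have hstar_in := card_filter_sdiff_add_card_inter (S := U (i + 1)) fun v hv => (hdeg v hv).2
  rw [card_filter_eq_one_eq_sum (S := U i) hF.1] at hstar_out
  rw [card_filter_eq_one_eq_sum (S := U (i + 1)) hF.2.1] at hstar_in
  have := hbal i (i + 1)
  omega

/-- In a feasible-system-like linear forest, for each `i ∈ {1,2,3}`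
the number of vertices of `U_i ∖ U*` with out-degree `1` equals the number of
vertices of `U_{i+1} ∖ U*` with in-degree `1`. -/
theorem matched_degree_counts {V : Type} [Fintype V] [DecidableEq V]
    (U : Fin 4 → Finset V) (Ustar : Finset V)
    (hdisj : ∀ i j, i ≠ j → Disjoint (U i) (U j))
    (hcover : U 0 ∪ U 1 ∪ U 2 ∪ U 3 = Finset.univ)
    (hbal : ∀ i j : Fin 4, (Ustar ∩ U i).card = (Ustar ∩ U j).card)
    (F : Finset (V × V))
    (hF : IsLinearForest F)
    (hcons : ∀ e ∈ F, ∃ i : Fin 4,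
      (e.1 ∈ U i ∧ e.2 ∈ U (i + 1)) ∨ (e.1 ∈ U (i + 1) ∧ e.2 ∈ U i))
    (hdeg : ∀ v ∈ Ustar, outDeg F v = 1 ∧ inDeg F v = 1)
    (hback : ∀ i j : Fin 4, eCount F (U (i + 1)) (U i) = eCount F (U (j + 1)) (U j)) :
    ∀ i : Fin 4, i ≠ 3 →
      ((U i \ Ustar).filter (fun v => outDeg F v = 1)).card =
        ((U (i + 1) \ Ustar).filter (fun v => inDeg F v = 1)).card :=
  matched_degree_counts_general U Ustar hdisj hbal F hF hcons hdeg hback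
end
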